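/- arXiv:1706.04544 — 6 statements merged into one kernel-verified Lean document; each statement's English description precedes it below -/
import Mathlib

section
/- Let 0 < ε < 1/200, let G be a countable discrete group that admits a left-invariant mean (i.e. G is amenable), let H be a complex Hilbert space, and let φ : G → B(H) be a map such that each φ(g) is a unitary operator and ‖φ(gh) − φ(g)φ(h)‖_op < ε for all g, h ∈ G. Then there exists a group homomorphism π : G → U(H) into the unitary group of B(H) such that ‖φ(g) − π(g)‖_op < 2ε for all g ∈ G. -/
/-!
Kazhdan's iteration. For a map `ρ` into invertible operators with defect
`δ = sup ‖ρ(xy) - ρ(x)ρ(y)‖` and `‖ρ(g)⁻¹‖ ≤ γ`, the average `ρ'(x) = mean_g ρ(xg) ρ(g)⁻¹`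
(an operator-valued mean, defined weakly through the scalar mean of matrix coefficients) is
`δγ`-close to `ρ`, and its defect is at most `(2δγ)²`: by invariance of the mean,
`ρ'(xy) - ρ'(x)ρ'(y)` is the mean of `(ρ(xyg)ρ(yg)⁻¹ - ρ'(x)) (ρ(yg)ρ(g)⁻¹ - ρ'(y))`, a product of
two factors of size `2δγ`. Symmetrizing, `x ↦ (ρ'(x) + ρ'(x⁻¹)*) / 2`, restores `ρ(x⁻¹) = ρ(x)*`
at the cost of a term of the same order. Starting from the unitary `φ`, the defects decay like
`4ε² / 2ⁿ` while the iterates move by at most `ε + 16ε²` in total, so they stay invertible and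
converge in operator norm to a multiplicative map `π` with `π(x⁻¹) = π(x)*`, i.e. a unitary
representation.
-/

/-- A left-invariant mean on the space of bounded real-valued functions on a group `G`:
a linear functional `m` with `m 1 = 1`, `m f ≥ 0` whenever `f ≥ 0` pointwise, and
`m (x ↦ f (g x)) = m f` for all `g ∈ G`. -/
structure LeftInvariantMean (G : Type*) [Group G] where
  m : (G → ℝ) → ℝ
  add : ∀ f g : G → ℝ, (∃ C, ∀ x, |f x| ≤ C) → (∃ C, ∀ x, |g x| ≤ C) →
    m (fun x => f x + g x) = m f + m g
  smul : ∀ (c : ℝ) (f : G → ℝ), (∃ C, ∀ x, |f x| ≤ C) →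
    m (fun x => c * f x) = c * m f
  one : m (fun _ => 1) = 1
  pos : ∀ f : G → ℝ, (∃ C, ∀ x, |f x| ≤ C) → (∀ x, 0 ≤ f x) → 0 ≤ m f
  left_inv : ∀ (g : G) (f : G → ℝ), (∃ C, ∀ x, |f x| ≤ C) →
    m (fun x => f (g * x)) = m f

open scoped InnerProductSpace ComplexConjugate Ring

-- For real-valued `f` this is, definitionally, the boundedness hypothesis in `LeftInvariantMean`.
def IsNormBounded {α E : Type*} [Norm E] (f : α → E) : Prop :=
  ∃ C, ∀ x, ‖f x‖ ≤ C

namespace IsNormBounded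

variable {α E : Type*}

lemma const [Norm E] (c : E) : IsNormBounded fun _ : α => c := ⟨‖c‖, fun _ => le_rfl⟩

lemma sub [SeminormedAddGroup E] {f g : α → E} (hf : IsNormBounded f) (hg : IsNormBounded g) :
    IsNormBounded fun x => f x - g x := by
  obtain ⟨C, hC⟩ := hf
  obtain ⟨D, hD⟩ := hg
  exact ⟨C + D, fun x => (norm_sub_le _ _).trans (add_le_add (hC x) (hD x))⟩

lemma add [SeminormedAddGroup E] {f g : α → E} (hf : IsNormBounded f) (hg : IsNormBounded g) :
    IsNormBounded fun x => f x + g x := by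
  obtain ⟨C, hC⟩ := hf
  obtain ⟨D, hD⟩ := hg
  exact ⟨C + D, fun x => (norm_add_le _ _).trans (add_le_add (hC x) (hD x))⟩

lemma mul [NonUnitalSeminormedRing E] {f g : α → E} (hf : IsNormBounded f)
    (hg : IsNormBounded g) : IsNormBounded fun x => f x * g x := by
  obtain ⟨C, hC⟩ := hf
  obtain ⟨D, hD⟩ := hg
  refine ⟨C * D, fun x => (norm_mul_le _ _).trans ?_⟩
  exact mul_le_mul (hC x) (hD x) (norm_nonneg _) ((norm_nonneg _).trans (hC x))

lemma comp [Norm E] {β : Type*} {f : α → E} (hf : IsNormBounded f) (g : β → α) :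
    IsNormBounded fun x => f (g x) :=
  let ⟨C, hC⟩ := hf; ⟨C, fun x => hC (g x)⟩

lemma re {f : α → ℂ} (hf : IsNormBounded f) : IsNormBounded fun x => (f x).re :=
  let ⟨C, hC⟩ := hf; ⟨C, fun x => (Complex.abs_re_le_norm _).trans (hC x)⟩

lemma im {f : α → ℂ} (hf : IsNormBounded f) : IsNormBounded fun x => (f x).im :=
  let ⟨C, hC⟩ := hf; ⟨C, fun x => (Complex.abs_im_le_norm _).trans (hC x)⟩

end IsNormBounded

namespace LeftInvariantMean

variable {G : Type*} [Group G] (M : LeftInvariantMean G)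

lemma map_smul_add_smul {f g : G → ℝ} (hf : IsNormBounded f) (hg : IsNormBounded g) (a b : ℝ) :
    M.m (fun x => a * f x + b * g x) = a * M.m f + b * M.m g := by
  rw [M.add _ _ ((IsNormBounded.const a).mul hf) ((IsNormBounded.const b).mul hg),
    M.smul a f hf, M.smul b g hg]

lemma map_const (c : ℝ) : M.m (fun _ => c) = c := by
  simpa [M.one] using M.smul c _ (IsNormBounded.const (1 : ℝ))

lemma map_mono {f g : G → ℝ} (hf : IsNormBounded f) (hg : IsNormBounded g)
    (h : ∀ x, f x ≤ g x) : M.m f ≤ M.m g := by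
  have := M.pos _ (((IsNormBounded.const 1).mul hg).add ((IsNormBounded.const (-1)).mul hf))
    fun x => by linarith [h x]
  rw [map_smul_add_smul M hg hf] at this
  linarith

def complexMean (f : G → ℂ) : ℂ :=
  Complex.mk (M.m fun x => (f x).re) (M.m fun x => (f x).im)

variable {f g : G → ℂ}

lemma complexMean_add (hf : IsNormBounded f) (hg : IsNormBounded g) :
    M.complexMean (fun x => f x + g x) = M.complexMean f + M.complexMean g := by
  apply Complex.ext
  · simpa [complexMean] using M.map_smul_add_smul hf.re hg.re 1 1
  · simpa [complexMean] using M.map_smul_add_smul hf.im hg.im 1 1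

lemma complexMean_const_mul (hf : IsNormBounded f) (c : ℂ) :
    M.complexMean (fun x => c * f x) = c * M.complexMean f := by
  apply Complex.ext
  · simpa [complexMean, sub_eq_add_neg] using M.map_smul_add_smul hf.re hf.im c.re (-c.im)
  · simpa [complexMean, add_comm] using M.map_smul_add_smul hf.im hf.re c.re c.im

lemma complexMean_sub (hf : IsNormBounded f) (hg : IsNormBounded g) :
    M.complexMean (fun x => f x - g x) = M.complexMean f - M.complexMean g := by
  apply Complex.ext
  · simpa [complexMean, sub_eq_add_neg] using M.map_smul_add_smul hf.re hg.re 1 (-1)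
  · simpa [complexMean, sub_eq_add_neg] using M.map_smul_add_smul hf.im hg.im 1 (-1)

lemma complexMean_const (c : ℂ) : M.complexMean (fun _ => c) = c := by
  simp [complexMean, map_const]

lemma complexMean_conj (hf : IsNormBounded f) :
    M.complexMean (fun x => conj (f x)) = conj (M.complexMean f) := by
  apply Complex.ext
  · simp [complexMean]
  · simpa [complexMean] using M.smul (-1) _ hf.im

lemma complexMean_comp_mul_left (hf : IsNormBounded f) (y : G) :
    M.complexMean (fun x => f (y * x)) = M.complexMean f := by
  apply Complex.ext
  · exact M.left_inv y _ hf.re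
  · exact M.left_inv y _ hf.im

lemma norm_complexMean_le {C : ℝ} (h : ∀ x, ‖f x‖ ≤ C) : ‖M.complexMean f‖ ≤ C := by
  have hf : IsNormBounded f := ⟨C, h⟩
  set z := M.complexMean f
  have hC : 0 ≤ C := (norm_nonneg _).trans (h 1)
  -- `‖z‖² = re (conj z * mean f)` is the mean of `re (conj z * f)`, which is at most `‖z‖ C`
  have hsq : ‖z‖ ^ 2 ≤ ‖z‖ * C := by
    have hre : ‖z‖ ^ 2 = M.m fun x => (conj z * f x).re := by
      change ‖z‖ ^ 2 = (M.complexMean fun x => conj z * f x).re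
      rw [M.complexMean_const_mul hf, Complex.conj_mul']
      norm_cast
    rw [hre, ← M.map_const (‖z‖ * C)]
    refine M.map_mono (((IsNormBounded.const _).mul hf).re) (IsNormBounded.const _) fun x => ?_
    calc (conj z * f x).re ≤ ‖conj z * f x‖ := Complex.re_le_norm _
      _ ≤ ‖z‖ * C := by rw [norm_mul, Complex.norm_conj]; gcongr; exact h x
  nlinarith [norm_nonneg z]

end LeftInvariantMean

lemma IsNormBounded.inner_apply {α H : Type*} [NormedAddCommGroup H] [InnerProductSpace ℂ H]
    {A : α → H →L[ℂ] H} (hA : IsNormBounded A) (ξ η : H) :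
    IsNormBounded fun g => ⟪A g ξ, η⟫_ℂ := by
  obtain ⟨C, hC⟩ := hA
  refine ⟨C * ‖ξ‖ * ‖η‖, fun g => (norm_inner_le_norm _ _).trans ?_⟩
  gcongr
  exact (A g).le_of_opNorm_le (hC g) ξ

namespace LeftInvariantMean

variable {G : Type*} [Group G] (M : LeftInvariantMean G)
variable {H : Type*} [NormedAddCommGroup H] [InnerProductSpace ℂ H] [CompleteSpace H]

noncomputable def meanForm {A : G → H →L[ℂ] H} (hA : IsNormBounded A) :
    H →L⋆[ℂ] H →L[ℂ] ℂ :=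
  LinearMap.mkContinuous₂
    (LinearMap.mk₂'ₛₗ (starRingEnd ℂ) (RingHom.id ℂ)
      (fun ξ η => M.complexMean fun g => ⟪A g ξ, η⟫_ℂ)
      (fun ξ₁ ξ₂ η => by
        simp only [map_add, inner_add_left]
        exact M.complexMean_add (hA.inner_apply ξ₁ η) (hA.inner_apply ξ₂ η))
      (fun c ξ η => by
        simp only [map_smul, inner_smul_left, smul_eq_mul]
        exact M.complexMean_const_mul (hA.inner_apply ξ η) _)
      (fun ξ η₁ η₂ => by
        simp only [inner_add_right]
        exact M.complexMean_add (hA.inner_apply ξ η₁) (hA.inner_apply ξ η₂))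
      (fun c ξ η => by
        simp only [inner_smul_right, smul_eq_mul, RingHom.id_apply]
        exact M.complexMean_const_mul (hA.inner_apply ξ η) _))
    hA.choose fun ξ η => M.norm_complexMean_le fun g =>
      (norm_inner_le_norm _ _).trans
        (mul_le_mul_of_nonneg_right ((A g).le_of_opNorm_le (hA.choose_spec g) ξ) (norm_nonneg _))

open Classical in
noncomputable def opMean (A : G → H →L[ℂ] H) : H →L[ℂ] H :=
  if hA : IsNormBounded A then InnerProductSpace.continuousLinearMapOfBilin (M.meanForm hA)
  else 0

variable {A B : G → H →L[ℂ] H}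

lemma inner_opMean_apply (hA : IsNormBounded A) (ξ η : H) :
    ⟪M.opMean A ξ, η⟫_ℂ = M.complexMean fun g => ⟪A g ξ, η⟫_ℂ := by
  simp only [opMean, dif_pos hA, InnerProductSpace.continuousLinearMapOfBilin_apply]
  rfl

lemma opMean_eq_of_inner (hA : IsNormBounded A) {T : H →L[ℂ] H}
    (h : ∀ ξ η, (M.complexMean fun g => ⟪A g ξ, η⟫_ℂ) = ⟪T ξ, η⟫_ℂ) : M.opMean A = T :=
  ContinuousLinearMap.ext fun ξ => ext_inner_right ℂ fun η => by
    rw [inner_opMean_apply M hA, h]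

lemma norm_opMean_le {C : ℝ} (hC : ∀ g, ‖A g‖ ≤ C) : ‖M.opMean A‖ ≤ C := by
  refine ContinuousLinearMap.opNorm_le_of_re_inner_le ((norm_nonneg _).trans (hC 1))
    fun ξ η hξ hη => (RCLike.re_le_norm _).trans ?_
  rw [inner_opMean_apply M ⟨C, hC⟩]
  refine M.norm_complexMean_le fun g => (norm_inner_le_norm _ _).trans ?_
  simpa [hξ, hη] using (A g).le_of_opNorm_le (hC g) ξ

lemma opMean_const (T : H →L[ℂ] H) : M.opMean (fun _ => T) = T :=
  M.opMean_eq_of_inner (.const T) fun _ _ => M.complexMean_const _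

lemma opMean_sub (hA : IsNormBounded A) (hB : IsNormBounded B) :
    M.opMean (fun g => A g - B g) = M.opMean A - M.opMean B :=
  M.opMean_eq_of_inner (hA.sub hB) fun ξ η => by
    simp only [sub_apply, inner_sub_left]
    rw [M.complexMean_sub (hA.inner_apply ξ η) (hB.inner_apply ξ η),
      inner_opMean_apply M hA, inner_opMean_apply M hB]

lemma opMean_mul_const (hA : IsNormBounded A) (T : H →L[ℂ] H) :
    M.opMean (fun g => A g * T) = M.opMean A * T :=
  M.opMean_eq_of_inner (hA.mul (.const T)) fun ξ η => by
    simp only [mul_apply_eq_comp]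
    rw [inner_opMean_apply M hA]

lemma opMean_const_mul (hA : IsNormBounded A) (T : H →L[ℂ] H) :
    M.opMean (fun g => T * A g) = T * M.opMean A :=
  M.opMean_eq_of_inner ((IsNormBounded.const T).mul hA) fun ξ η => by
    simp only [mul_apply_eq_comp, ← ContinuousLinearMap.adjoint_inner_right T]
    rw [inner_opMean_apply M hA]

lemma opMean_star (hA : IsNormBounded A) :
    M.opMean (fun g => star (A g)) = star (M.opMean A) := by
  have hA' : IsNormBounded fun g => star (A g) := by simpa [IsNormBounded] using hA
  refine M.opMean_eq_of_inner hA' fun ξ η => ?_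
  simp only [ContinuousLinearMap.star_eq_adjoint, ContinuousLinearMap.adjoint_inner_left]
  rw [← inner_conj_symm, inner_opMean_apply M hA, ← M.complexMean_conj (hA.inner_apply η ξ)]
  simp only [inner_conj_symm]

lemma opMean_comp_mul_left (hA : IsNormBounded A) (x : G) :
    M.opMean (fun g => A (x * g)) = M.opMean A :=
  M.opMean_eq_of_inner (hA.comp (x * ·)) fun ξ η => by
    rw [inner_opMean_apply M hA]
    exact M.complexMean_comp_mul_left (hA.inner_apply ξ η) x

lemma norm_opMean_sub_le {T : H →L[ℂ] H} {r : ℝ} (h : ∀ g, ‖A g - T‖ ≤ r) :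
    ‖M.opMean A - T‖ ≤ r := by
  have hA : IsNormBounded A :=
    ⟨r + ‖T‖, fun g => by simpa using (norm_add_le (A g - T) T).trans (add_le_add (h g) le_rfl)⟩
  rw [← M.opMean_const T, ← M.opMean_sub hA (.const T)]
  exact M.norm_opMean_le h

end LeftInvariantMean

def IsAlmostHom {G A : Type*} [Mul G] [NormedRing A] (ρ : G → A) (δ : ℝ) : Prop :=
  ∀ x y, ‖ρ (x * y) - ρ x * ρ y‖ ≤ δ

def IsHermitianFn {G A : Type*} [Inv G] [Star A] (ρ : G → A) : Prop :=
  ∀ x, star (ρ x) = ρ x⁻¹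

lemma inverse_eq_star_of_mem_unitary {R : Type*} [MonoidWithZero R] [StarMul R] {u : R}
    (hu : u ∈ unitary R) : u⁻¹ʳ = star u :=
  Ring.inverse_unit (Unitary.toUnits ⟨u, hu⟩)

lemma norm_mul_inverse_sub_le {G A : Type*} [Monoid G] [NormedRing A] {ρ : G → A} {δ γ : ℝ}
    (hunit : ∀ g, IsUnit (ρ g)) (hγ : ∀ g, ‖(ρ g)⁻¹ʳ‖ ≤ γ) (hρ : IsAlmostHom ρ δ) (x g : G) :
    ‖ρ (x * g) * (ρ g)⁻¹ʳ - ρ x‖ ≤ δ * γ := by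
  have : ρ (x * g) * (ρ g)⁻¹ʳ - ρ x = (ρ (x * g) - ρ x * ρ g) * (ρ g)⁻¹ʳ := by
    rw [sub_mul, Ring.mul_inverse_cancel_right _ _ (hunit g)]
  rw [this]
  exact (norm_mul_le _ _).trans
    (mul_le_mul (hρ x g) (hγ g) (norm_nonneg _) ((norm_nonneg _).trans (hρ x g)))

lemma isNormBounded_mul_inverse {G A : Type*} [Monoid G] [NormedRing A] {ρ : G → A} {δ γ : ℝ}
    (hunit : ∀ g, IsUnit (ρ g)) (hγ : ∀ g, ‖(ρ g)⁻¹ʳ‖ ≤ γ) (hρ : IsAlmostHom ρ δ) (x : G) :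
    IsNormBounded fun g => ρ (x * g) * (ρ g)⁻¹ʳ :=
  ⟨δ * γ + ‖ρ x‖, fun g => (norm_le_norm_sub_add _ (ρ x)).trans
    (add_le_add (norm_mul_inverse_sub_le hunit hγ hρ x g) le_rfl)⟩

section CStarRing

variable {A : Type*} [NormedRing A] [StarRing A] [CStarRing A]

lemma norm_le_one_of_mem_unitary {u : A} (hu : u ∈ unitary A) : ‖u‖ ≤ 1 := by
  nontriviality A
  exact (CStarRing.norm_of_mem_unitary hu).le

lemma norm_inverse_le_of_mem_unitary {u : A} (hu : u ∈ unitary A) : ‖u⁻¹ʳ‖ ≤ 1 := by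
  rw [inverse_eq_star_of_mem_unitary hu]
  exact norm_le_one_of_mem_unitary (Unitary.star_mem hu)

lemma isUnit_and_norm_inverse_le_of_norm_sub_le [CompleteSpace A] {u T : A}
    (hu : u ∈ unitary A) {r : ℝ} (hr : r < 1) (h : ‖T - u‖ ≤ r) :
    IsUnit T ∧ ‖T⁻¹ʳ‖ ≤ (1 - r)⁻¹ := by
  -- `T = u (1 - t)` with `‖t‖ < 1`, and `1 - t` is inverted by a Neumann series
  set t := star u * (u - T)
  have ht : ‖t‖ ≤ r := by
    rw [CStarRing.norm_mem_unitary_mul _ (Unitary.star_mem hu), norm_sub_rev]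
    exact h
  have ht1 : ‖t‖ < 1 := ht.trans_lt hr
  have hT : T = u * (1 - t) := by
    rw [mul_sub, mul_one, ← mul_assoc, Unitary.mul_star_self_of_mem hu, one_mul, sub_sub_cancel]
  have hu' : IsUnit u := (Unitary.toUnits ⟨u, hu⟩).isUnit
  refine ⟨hT ▸ hu'.mul (Units.oneSub t ht1).isUnit, ?_⟩
  rw [hT, Ring.inverse_mul (.inl hu'), inverse_eq_star_of_mem_unitary hu,
    CStarRing.norm_mul_mem_unitary _ (Unitary.star_mem hu), NormedRing.inverse_one_sub t ht1]
  calc ‖∑' n : ℕ, t ^ n‖ ≤ ‖(1 : A)‖ - 1 + (1 - ‖t‖)⁻¹ := tsum_geometric_le_of_norm_lt_one t ht1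
    _ ≤ (1 - r)⁻¹ := by
      have hone : ‖(1 : A)‖ ≤ 1 := norm_le_one_of_mem_unitary (one_mem _)
      have hinv : (1 - ‖t‖)⁻¹ ≤ (1 - r)⁻¹ := inv_anti₀ (by linarith) (by linarith)
      linarith

end CStarRing

section Symmetrize

variable {G A : Type*} [Group G] [CStarAlgebra A]

noncomputable def symmetrize (σ : G → A) (x : G) : A :=
  (2⁻¹ : ℂ) • (σ x + star (σ x⁻¹))

lemma isHermitianFn_symmetrize (σ : G → A) : IsHermitianFn (symmetrize σ) := fun x => by
  simp [symmetrize, add_comm]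

variable {σ τ : G → A} {s : ℝ}

lemma norm_symmetrize_sub_le (hτ : IsHermitianFn τ) (h : ∀ x, ‖σ x - τ x‖ ≤ s) (x : G) :
    ‖symmetrize σ x - τ x‖ ≤ s := by
  have : symmetrize σ x - τ x = (2⁻¹ : ℂ) • ((σ x - τ x) + star (σ x⁻¹ - τ x⁻¹)) := by
    rw [star_sub, hτ, inv_inv, symmetrize]
    module
  rw [this, norm_smul]
  calc ‖(2⁻¹ : ℂ)‖ * ‖σ x - τ x + star (σ x⁻¹ - τ x⁻¹)‖
      ≤ 2⁻¹ * (s + s) := by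
        rw [norm_inv, Complex.norm_ofNat]
        gcongr
        exact (norm_add_le _ _).trans (by rw [norm_star]; exact add_le_add (h x) (h x⁻¹))
    _ = s := by ring

lemma isAlmostHom_symmetrize {d : ℝ} (hσ : IsAlmostHom σ d) (hτ : IsHermitianFn τ)
    (h : ∀ x, ‖σ x - τ x‖ ≤ s) : IsAlmostHom (symmetrize σ) (d + s ^ 2) := by
  have hskew : ∀ x, ‖σ x - star (σ x⁻¹)‖ ≤ 2 * s := fun x => by
    have : σ x - star (σ x⁻¹) = (σ x - τ x) - star (σ x⁻¹ - τ x⁻¹) := by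
      rw [star_sub, hτ, inv_inv, sub_sub_sub_cancel_right]
    rw [this, two_mul]
    exact (norm_sub_le _ _).trans (by rw [norm_star]; exact add_le_add (h x) (h x⁻¹))
  intro x y
  have key : symmetrize σ (x * y) - symmetrize σ x * symmetrize σ y =
      (2⁻¹ : ℂ) • (σ (x * y) - σ x * σ y) + (2⁻¹ : ℂ) • star (σ (y⁻¹ * x⁻¹) - σ y⁻¹ * σ x⁻¹) +
        (4⁻¹ : ℂ) • ((σ x - star (σ x⁻¹)) * (σ y - star (σ y⁻¹))) := by
    simp only [symmetrize, mul_inv_rev, star_sub, star_mul, smul_mul_smul_comm, mul_add, add_mul,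
      sub_mul, mul_sub]
    module
  have hhalf : ‖(2⁻¹ : ℂ)‖ = 2⁻¹ := by rw [norm_inv, Complex.norm_ofNat]
  have hquarter : ‖(4⁻¹ : ℂ)‖ = 4⁻¹ := by rw [norm_inv, Complex.norm_ofNat]
  rw [key]
  refine (norm_add₃_le).trans ?_
  rw [norm_smul, norm_smul, norm_smul, hhalf, hquarter, norm_star]
  have hxy := hσ x y
  have hyx := hσ y⁻¹ x⁻¹
  have hcross := (norm_mul_le _ _).trans
    (mul_le_mul (hskew x) (hskew y) (norm_nonneg _) (by linarith [norm_nonneg (σ x - τ x), h x]))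
  nlinarith

end Symmetrize

lemma map_mul_of_tendsto {G A : Type*} [Mul G] [NormedRing A] {ρ : ℕ → G → A} {π : G → A}
    {δ : ℕ → ℝ} (hρ : ∀ n, IsAlmostHom (ρ n) (δ n)) (hδ : Filter.Tendsto δ .atTop (nhds 0))
    (hπ : ∀ x, Filter.Tendsto (fun n => ρ n x) .atTop (nhds (π x))) (x y : G) :
    π (x * y) = π x * π y := by
  have hlim := (hπ (x * y)).sub ((hπ x).mul (hπ y))
  have hzero : Filter.Tendsto (fun n => ρ n (x * y) - ρ n x * ρ n y) .atTop (nhds 0) :=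
    squeeze_zero_norm (fun n => hρ n x y) hδ
  exact sub_eq_zero.mp (tendsto_nhds_unique hlim hzero)

lemma IsHermitianFn.of_tendsto {G A : Type*} [Inv G] [TopologicalSpace A] [Star A]
    [ContinuousStar A] [T2Space A] {ρ : ℕ → G → A} {π : G → A} (hρ : ∀ n, IsHermitianFn (ρ n))
    (hπ : ∀ x, Filter.Tendsto (fun n => ρ n x) .atTop (nhds (π x))) : IsHermitianFn π :=
  fun x => tendsto_nhds_unique (hπ x).star (by simpa only [hρ _ x] using hπ x⁻¹)

lemma exists_monoidHom_unitary {G A : Type*} [Group G] [Monoid A] [StarMul A] {π : G → A}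
    (hmul : ∀ x y, π (x * y) = π x * π y) (hπ : IsHermitianFn π) (hunit : IsUnit (π 1)) :
    ∃ ψ : G →* unitary A, ∀ x, (ψ x : A) = π x := by
  have hone : π 1 = 1 := hunit.mul_eq_right.mp (by rw [← hmul, one_mul])
  have hmem : ∀ x, π x ∈ unitary A := fun x =>
    Unitary.mem_iff.mpr ⟨by rw [hπ, ← hmul, inv_mul_cancel, hone],
      by rw [hπ, ← hmul, mul_inv_cancel, hone]⟩
  exact ⟨{ toFun := fun x => ⟨π x, hmem x⟩
           map_one' := Subtype.ext hone
           map_mul' := fun x y => Subtype.ext (hmul x y) }, fun _ => rfl⟩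

namespace Kazhdan

variable {G : Type*} [Group G] (M : LeftInvariantMean G)
variable {H : Type*} [NormedAddCommGroup H] [InnerProductSpace ℂ H] [CompleteSpace H]

noncomputable def average (ρ : G → H →L[ℂ] H) (x : G) : H →L[ℂ] H :=
  M.opMean fun g => ρ (x * g) * (ρ g)⁻¹ʳ

section Average

variable {ρ : G → H →L[ℂ] H} {δ γ : ℝ} (hunit : ∀ g, IsUnit (ρ g))
  (hγ : ∀ g, ‖(ρ g)⁻¹ʳ‖ ≤ γ) (hρ : IsAlmostHom ρ δ)
include hunit hγ hρ

lemma norm_average_sub_le (x : G) : ‖average M ρ x - ρ x‖ ≤ δ * γ :=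
  M.norm_opMean_sub_le (norm_mul_inverse_sub_le hunit hγ hρ x)

lemma isAlmostHom_average : IsAlmostHom (average M ρ) ((2 * δ * γ) ^ 2) := by
  intro x y
  set D : G → G → H →L[ℂ] H := fun x g => ρ (x * g) * (ρ g)⁻¹ʳ
  set R : G → H →L[ℂ] H := average M ρ
  have hD : ∀ x, IsNormBounded (D x) := isNormBounded_mul_inverse hunit hγ hρ
  have hclose : ∀ x g, ‖D x g - R x‖ ≤ 2 * δ * γ := fun x g => by
    have h1 := norm_mul_inverse_sub_le hunit hγ hρ x g
    have h2 := norm_average_sub_le M hunit hγ hρ x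
    calc ‖D x g - R x‖ ≤ ‖D x g - ρ x‖ + ‖ρ x - R x‖ := norm_sub_le_norm_sub_add_norm_sub _ _ _
      _ ≤ 2 * δ * γ := by rw [norm_sub_rev (ρ x)]; linarith
  have hprod : ∀ g, D x (y * g) * D y g = D (x * y) g := fun g => by
    simp only [D, mul_assoc, Ring.inverse_mul_cancel_left _ _ (hunit (y * g))]
  have hexpand : ∀ g, (D x (y * g) - R x) * (D y g - R y) =
      (D (x * y) g - R x * R y) - R x * (D y g - R y) - (D x (y * g) - R x) * R y := fun g => by
    rw [← hprod]
    noncomm_ring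
  have hDxy : IsNormBounded fun g => D (x * y) g - R x * R y := (hD _).sub (.const _)
  have hDy : IsNormBounded fun g => D y g - R y := (hD y).sub (.const _)
  have hDx : IsNormBounded fun g => D x (y * g) - R x := ((hD x).comp (y * ·)).sub (.const _)
  have e1 : M.opMean (fun g => D (x * y) g - R x * R y) = R (x * y) - R x * R y := by
    rw [M.opMean_sub (hD _) (.const _), M.opMean_const]
    rfl
  have e2 : M.opMean (fun g => R x * (D y g - R y)) = 0 := by
    rw [M.opMean_const_mul hDy, M.opMean_sub (hD y) (.const _), M.opMean_const]
    exact mul_eq_zero_of_right _ (sub_self _)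
  have e3 : M.opMean (fun g => (D x (y * g) - R x) * R y) = 0 := by
    rw [M.opMean_mul_const hDx, M.opMean_sub ((hD x).comp (y * ·)) (.const _), M.opMean_const]
    exact mul_eq_zero_of_left (sub_eq_zero.mpr (M.opMean_comp_mul_left (hD x) y)) _
  have hmean : R (x * y) - R x * R y =
      M.opMean fun g => (D x (y * g) - R x) * (D y g - R y) := by
    simp only [hexpand]
    rw [M.opMean_sub (hDxy.sub ((IsNormBounded.const (R x)).mul hDy)) (hDx.mul (.const (R y))),
      M.opMean_sub hDxy ((IsNormBounded.const (R x)).mul hDy), e1, e2, e3, sub_zero, sub_zero]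
  rw [hmean, sq]
  refine M.norm_opMean_le fun g => (norm_mul_le _ _).trans ?_
  exact mul_le_mul (hclose x _) (hclose y g) (norm_nonneg _) ((norm_nonneg _).trans (hclose x 1))

end Average

lemma isHermitianFn_average_of_unitary {φ : G → H →L[ℂ] H}
    (hφ : ∀ g, φ g ∈ unitary (H →L[ℂ] H)) : IsHermitianFn (average M φ) := by
  have hbdd : ∀ x, IsNormBounded fun g => φ (x * g) * (φ g)⁻¹ʳ := fun x =>
    ⟨1, fun g => by
      show ‖φ (x * g) * (φ g)⁻¹ʳ‖ ≤ 1
      rw [inverse_eq_star_of_mem_unitary (hφ g),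
        CStarRing.norm_mul_mem_unitary _ (Unitary.star_mem (hφ g))]
      exact norm_le_one_of_mem_unitary (hφ _)⟩
  intro x
  calc star (average M φ x) = M.opMean fun g => star (φ (x * g) * (φ g)⁻¹ʳ) :=
        (M.opMean_star (hbdd x)).symm
    _ = M.opMean fun g => φ (x⁻¹ * (x * g)) * (φ (x * g))⁻¹ʳ := by
        congr 1
        funext g
        rw [star_mul, inverse_eq_star_of_mem_unitary (hφ g),
          inverse_eq_star_of_mem_unitary (hφ _), star_star, inv_mul_cancel_left]
    _ = average M φ x⁻¹ := M.opMean_comp_mul_left (hbdd x⁻¹) x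

noncomputable def step (ρ : G → H →L[ℂ] H) : G → H →L[ℂ] H :=
  symmetrize (average M ρ)

lemma step_spec {φ ρ : G → H →L[ℂ] H} {δ : ℝ} (hφ : ∀ g, φ g ∈ unitary (H →L[ℂ] H))
    (hρ : IsAlmostHom ρ δ) (hρh : IsHermitianFn ρ) (hdist : ∀ x, ‖ρ x - φ x‖ ≤ 1 / 2) :
    IsAlmostHom (step M ρ) (20 * δ ^ 2) ∧ ∀ x, ‖step M ρ x - ρ x‖ ≤ 2 * δ := by
  have hinv : ∀ g, IsUnit (ρ g) ∧ ‖(ρ g)⁻¹ʳ‖ ≤ (1 - 1 / 2)⁻¹ := fun g =>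
    isUnit_and_norm_inverse_le_of_norm_sub_le (hφ g) (by norm_num) (hdist g)
  have hγ : ∀ g, ‖(ρ g)⁻¹ʳ‖ ≤ 2 := fun g => (hinv g).2.trans_eq (by norm_num)
  have hunit : ∀ g, IsUnit (ρ g) := fun g => (hinv g).1
  have hclose : ∀ x, ‖average M ρ x - ρ x‖ ≤ 2 * δ := fun x =>
    (norm_average_sub_le M hunit hγ hρ x).trans_eq (mul_comm _ _)
  have havg := isAlmostHom_average M hunit hγ hρ
  have hdef := isAlmostHom_symmetrize havg hρh hclose
  refine ⟨fun x y => ?_, norm_symmetrize_sub_le hρh hclose⟩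
  have := hdef x y
  rw [show (2 * δ * 2) ^ 2 + (2 * δ) ^ 2 = 20 * δ ^ 2 by ring] at this
  exact this

noncomputable def approxSeq (φ : G → H →L[ℂ] H) : ℕ → G → H →L[ℂ] H
  | 0 => average M φ
  | n + 1 => step M (approxSeq φ n)

section ApproxSeq

variable {φ : G → H →L[ℂ] H} {ε : ℝ} (hφ : ∀ g, φ g ∈ unitary (H →L[ℂ] H))
  (hφε : IsAlmostHom φ ε) (hε : ε ≤ 1 / 16)
include hφ hφε hε

lemma approxSeq_spec (n : ℕ) :
    IsAlmostHom (approxSeq M φ n) (4 * ε ^ 2 * (1 / 2) ^ n) ∧ IsHermitianFn (approxSeq M φ n) ∧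
      ∀ x, ‖approxSeq M φ n x - φ x‖ ≤ ε + 16 * ε ^ 2 * (1 - (1 / 2) ^ n) := by
  have hε0 : 0 ≤ ε := (norm_nonneg _).trans (hφε 1 1)
  induction n with
  | zero =>
    have hunit : ∀ g, IsUnit (φ g) := fun g => (Unitary.toUnits ⟨φ g, hφ g⟩).isUnit
    have hγ : ∀ g, ‖(φ g)⁻¹ʳ‖ ≤ 1 := fun g => norm_inverse_le_of_mem_unitary (hφ g)
    refine ⟨fun x y => ?_, isHermitianFn_average_of_unitary M hφ, fun x => ?_⟩
    · exact (isAlmostHom_average M hunit hγ hφε x y).trans_eq (by ring)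
    · exact (norm_average_sub_le M hunit hγ hφε x).trans_eq (by ring)
  | succ n ih =>
    obtain ⟨hdef, hherm, hdist⟩ := ih
    have hq0 : (0 : ℝ) < (1 / 2) ^ n := by positivity
    have hq1 : ((1 : ℝ) / 2) ^ n ≤ 1 := pow_le_one₀ (by norm_num) (by norm_num)
    have hεsq : ε ^ 2 ≤ ε / 16 := by nlinarith
    have hhalf : ∀ x, ‖approxSeq M φ n x - φ x‖ ≤ 1 / 2 := fun x =>
      (hdist x).trans (by nlinarith)
    obtain ⟨hdef', hstep⟩ := step_spec M hφ hdef hherm hhalf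
    refine ⟨fun x y => (hdef' x y).trans ?_, isHermitianFn_symmetrize _, fun x => ?_⟩
    · have hεq : ε ^ 2 * (1 / 2) ^ n ≤ 1 / 256 := by nlinarith
      rw [pow_succ (1 / 2 : ℝ) n]
      nlinarith [mul_le_mul_of_nonneg_left hεq (mul_nonneg (sq_nonneg ε) hq0.le)]
    · calc ‖approxSeq M φ (n + 1) x - φ x‖
          ≤ ‖approxSeq M φ (n + 1) x - approxSeq M φ n x‖ + ‖approxSeq M φ n x - φ x‖ :=
            norm_sub_le_norm_sub_add_norm_sub _ _ _
        _ ≤ 2 * (4 * ε ^ 2 * (1 / 2) ^ n) + (ε + 16 * ε ^ 2 * (1 - (1 / 2) ^ n)) :=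
            add_le_add (hstep x) (hdist x)
        _ = ε + 16 * ε ^ 2 * (1 - (1 / 2) ^ (n + 1)) := by ring

lemma norm_approxSeq_succ_sub_le (n : ℕ) (x : G) :
    ‖approxSeq M φ (n + 1) x - approxSeq M φ n x‖ ≤ 8 * ε ^ 2 * (1 / 2) ^ n := by
  obtain ⟨hdef, hherm, hdist⟩ := approxSeq_spec M hφ hφε hε n
  have hε0 : 0 ≤ ε := (norm_nonneg _).trans (hφε 1 1)
  have hq0 : (0 : ℝ) < (1 / 2) ^ n := by positivity
  have hhalf : ∀ x, ‖approxSeq M φ n x - φ x‖ ≤ 1 / 2 := fun x =>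
    (hdist x).trans (by nlinarith)
  exact ((step_spec M hφ hdef hherm hhalf).2 x).trans_eq (by ring)

end ApproxSeq

include M in
theorem exists_unitaryHom_norm_sub_le {φ : G → H →L[ℂ] H} {ε : ℝ}
    (hφ : ∀ g, φ g ∈ unitary (H →L[ℂ] H)) (hφε : IsAlmostHom φ ε) (hε : ε ≤ 1 / 16) :
    ∃ π : G →* unitary (H →L[ℂ] H), ∀ g, ‖φ g - (π g : H →L[ℂ] H)‖ ≤ ε + 16 * ε ^ 2 := by
  have hε0 : 0 ≤ ε := (norm_nonneg _).trans (hφε 1 1)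
  have hspec := approxSeq_spec M hφ hφε hε
  have hcauchy : ∀ x, CauchySeq fun n => approxSeq M φ n x := fun x =>
    cauchySeq_of_le_geometric (1 / 2) (8 * ε ^ 2) (by norm_num) fun n => by
      rw [dist_comm, dist_eq_norm]
      exact norm_approxSeq_succ_sub_le M hφ hφε hε n x
  choose π₀ hπ₀ using fun x => cauchySeq_tendsto_of_complete (hcauchy x)
  have hdist : ∀ x, ‖π₀ x - φ x‖ ≤ ε + 16 * ε ^ 2 := fun x =>
    le_of_tendsto ((hπ₀ x).sub_const (φ x)).norm (.of_forall fun n => (hspec n).2.2 x |>.trans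
      (by nlinarith [pow_pos (by norm_num : (0 : ℝ) < 1 / 2) n]))
  have hmul := map_mul_of_tendsto (fun n => (hspec n).1)
    (by simpa using (tendsto_pow_atTop_nhds_zero_of_lt_one (r := (1 : ℝ) / 2) (by norm_num)
      (by norm_num)).const_mul (4 * ε ^ 2)) hπ₀
  have hunit : IsUnit (π₀ 1) :=
    (isUnit_and_norm_inverse_le_of_norm_sub_le (hφ 1) (by nlinarith) (hdist 1)).1
  obtain ⟨π, hπ⟩ := exists_monoidHom_unitary hmul (.of_tendsto (fun n => (hspec n).2.1) hπ₀) hunit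
  exact ⟨π, fun g => by rw [hπ, norm_sub_rev]; exact hdist g⟩

end Kazhdan

theorem kazhdan_stability_general
    {G : Type*} [Group G] (hG : Nonempty (LeftInvariantMean G))
    {H : Type*} [NormedAddCommGroup H] [InnerProductSpace ℂ H] [CompleteSpace H]
    (ε : ℝ) (hε0 : 0 < ε) (hε : ε < 1 / 200)
    (φ : G → (H →L[ℂ] H))
    (hunit : ∀ g : G, φ g ∈ unitary (H →L[ℂ] H))
    (happrox : ∀ g h : G, ‖φ (g * h) - φ g * φ h‖ < ε) :
    ∃ π : G →* unitary (H →L[ℂ] H),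
      ∀ g : G, ‖φ g - (π g : H →L[ℂ] H)‖ < 2 * ε := by
  obtain ⟨M⟩ := hG
  obtain ⟨π, hπ⟩ := Kazhdan.exists_unitaryHom_norm_sub_le M hunit
    (fun g h => (happrox g h).le) (by linarith)
  exact ⟨π, fun g => (hπ g).trans_lt (by nlinarith)⟩

/-- **Kazhdan's stability theorem**: an `ε`-representation (in operator norm) of a countable
discrete amenable group on a Hilbert space is `2ε`-close to a genuine unitary
representation. -/
theorem kazhdan_stability
    {G : Type*} [Group G] [Countable G] (hG : Nonempty (LeftInvariantMean G))
    {H : Type*} [NormedAddCommGroup H] [InnerProductSpace ℂ H] [CompleteSpace H]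
    (ε : ℝ) (hε0 : 0 < ε) (hε : ε < 1 / 200)
    (φ : G → (H →L[ℂ] H))
    (hunit : ∀ g : G, φ g ∈ unitary (H →L[ℂ] H))
    (happrox : ∀ g h : G, ‖φ (g * h) - φ g * φ h‖ < ε) :
    ∃ π : G →* unitary (H →L[ℂ] H),
      ∀ g : G, ‖φ g - (π g : H →L[ℂ] H)‖ < 2 * ε :=
  kazhdan_stability_general hG ε hε0 hε φ hunit happrox
end

section
/- Let G be a (countable, discrete) group, let m be a left-invariant mean on the bounded complex-valued functions on G, let H be a complex Hilbert space, and let φ : G → B(H) satisfy sup_{x ∈ G} ‖φ(x)‖_op < ∞. Suppose ψ : G → B(H) is a map satisfying ⟨ψ(x)ξ, η⟩ = m(y ↦ ⟨φ(xy)φ(y)*ξ, η⟩) for all x ∈ G and all ξ, η ∈ H. Then ψ is positive definite: for every finite subset F ⊆ G and every family of vectors (ξ_x)_{x ∈ F} in H, the sum ∑_{x,y ∈ F} ⟨ψ(x y⁻¹) ξ_y, ξ_x⟩ is a nonnegative real number. -/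
/-!
Moving `φ(x y⁻¹ z)` across the inner product, `⟪ξ_x, ψ(x y⁻¹) ξ_y⟫` is the mean of
`z ↦ ⟪φ(x y⁻¹ z)* ξ_x, φ(z)* ξ_y⟫`, and left invariance (`z ↦ y z`) turns it into the mean of
`z ↦ ⟪φ(xz)* ξ_x, φ(yz)* ξ_y⟫`. By linearity of the mean the double sum is the mean of
`z ↦ ‖∑_x φ(xz)* ξ_x‖²`, a bounded nonnegative function, so it is a nonnegative real.
-/

/-- A left-invariant mean on the space of bounded complex-valued functions on a group `G`:
a linear functional `m` with `m 1 = 1`, `m f` real for real-valued `f`, `m f ≥ 0` for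
pointwise nonnegative (real-valued) `f`, and `m (y ↦ f (g y)) = m f` for all `g ∈ G`. -/
structure LeftInvariantMeanC (G : Type*) [Group G] where
  m : (G → ℂ) → ℂ
  add : ∀ f g : G → ℂ, (∃ C, ∀ x, ‖f x‖ ≤ C) → (∃ C, ∀ x, ‖g x‖ ≤ C) →
    m (fun x => f x + g x) = m f + m g
  smul : ∀ (c : ℂ) (f : G → ℂ), (∃ C, ∀ x, ‖f x‖ ≤ C) →
    m (fun x => c * f x) = c * m f
  one : m (fun _ => 1) = 1
  real : ∀ f : G → ℂ, (∃ C, ∀ x, ‖f x‖ ≤ C) → (∀ x, (f x).im = 0) → (m f).im = 0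
  pos : ∀ f : G → ℂ, (∃ C, ∀ x, ‖f x‖ ≤ C) → (∀ x, (f x).im = 0 ∧ 0 ≤ (f x).re) →
    0 ≤ (m f).re
  left_inv : ∀ (g : G) (f : G → ℂ), (∃ C, ∀ x, ‖f x‖ ≤ C) →
    m (fun x => f (g * x)) = m f

open scoped InnerProductSpace

section Bounds

variable {α : Type*}

theorem exists_bound_finset_sum {ι E : Type*} [SeminormedAddCommGroup E] (s : Finset ι)
    (f : ι → α → E) (hf : ∀ i, ∃ C, ∀ x, ‖f i x‖ ≤ C) :
    ∃ C, ∀ x, ‖∑ i ∈ s, f i x‖ ≤ C := by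
  choose C hC using hf
  exact ⟨∑ i ∈ s, C i, fun x => (norm_sum_le _ _).trans (Finset.sum_le_sum fun i _ => hC i x)⟩

variable {𝕜 E : Type*} [RCLike 𝕜] [SeminormedAddCommGroup E] [InnerProductSpace 𝕜 E]

theorem exists_bound_inner {u v : α → E} (hu : ∃ C, ∀ x, ‖u x‖ ≤ C)
    (hv : ∃ C, ∀ x, ‖v x‖ ≤ C) : ∃ C, ∀ x, ‖⟪u x, v x⟫_𝕜‖ ≤ C := by
  obtain ⟨C, hC⟩ := hu
  obtain ⟨D, hD⟩ := hv
  refine ⟨C * D, fun x => (norm_inner_le_norm _ _).trans ?_⟩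
  exact mul_le_mul (hC x) (hD x) (norm_nonneg _) ((norm_nonneg _).trans (hC x))

end Bounds

theorem exists_bound_adjoint_apply {α 𝕜 E F : Type*} [RCLike 𝕜]
    [NormedAddCommGroup E] [InnerProductSpace 𝕜 E] [CompleteSpace E]
    [NormedAddCommGroup F] [InnerProductSpace 𝕜 F] [CompleteSpace F]
    {T : α → E →L[𝕜] F} (hT : ∃ C, ∀ x, ‖T x‖ ≤ C) (v : F) :
    ∃ C, ∀ x, ‖ContinuousLinearMap.adjoint (T x) v‖ ≤ C := by
  obtain ⟨C, hC⟩ := hT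
  refine ⟨C * ‖v‖, fun x => ((T x).adjoint.le_opNorm v).trans ?_⟩
  rw [LinearIsometryEquiv.norm_map]
  exact mul_le_mul_of_nonneg_right (hC x) (norm_nonneg v)

namespace LeftInvariantMeanC

variable {G : Type*} [Group G] (M : LeftInvariantMeanC G)

theorem map_zero : M.m (fun _ => 0) = 0 := by
  simpa using M.smul 0 (fun _ => 1) ⟨1, fun _ => by simp⟩

theorem map_sum {ι : Type*} (s : Finset ι) (f : ι → G → ℂ)
    (hf : ∀ i, ∃ C, ∀ x, ‖f i x‖ ≤ C) :
    M.m (fun x => ∑ i ∈ s, f i x) = ∑ i ∈ s, M.m (f i) := by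
  classical
  induction s using Finset.induction with
  | empty => simpa using M.map_zero
  | insert a s ha ih =>
    simp only [Finset.sum_insert ha]
    rw [M.add _ _ (hf a) (exists_bound_finset_sum s f hf), ih]

variable {E : Type*} [NormedAddCommGroup E] [InnerProductSpace ℂ E]

theorem map_inner_sum_sum {ι κ : Type*} (s : Finset ι) (t : Finset κ)
    {u : ι → G → E} {v : κ → G → E} (hu : ∀ i, ∃ C, ∀ x, ‖u i x‖ ≤ C)
    (hv : ∀ j, ∃ C, ∀ x, ‖v j x‖ ≤ C) :
    M.m (fun x => ⟪∑ i ∈ s, u i x, ∑ j ∈ t, v j x⟫_ℂ) =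
      ∑ i ∈ s, ∑ j ∈ t, M.m (fun x => ⟪u i x, v j x⟫_ℂ) := by
  simp_rw [sum_inner, inner_sum]
  rw [M.map_sum s _ fun i => exists_bound_finset_sum t _ fun j => exists_bound_inner (hu i) (hv j)]
  exact Finset.sum_congr rfl fun i _ => M.map_sum t _ fun j => exists_bound_inner (hu i) (hv j)

theorem im_map_inner_self_eq_zero_and_re_nonneg {u : G → E} (hu : ∃ C, ∀ x, ‖u x‖ ≤ C) :
    (M.m (fun x => ⟪u x, u x⟫_ℂ)).im = 0 ∧ 0 ≤ (M.m (fun x => ⟪u x, u x⟫_ℂ)).re := by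
  have hself : ∀ x, (⟪u x, u x⟫_ℂ).im = 0 ∧ 0 ≤ (⟪u x, u x⟫_ℂ).re := fun x =>
    ⟨inner_self_im (𝕜 := ℂ) (u x), inner_self_nonneg (𝕜 := ℂ)⟩
  exact ⟨M.real _ (exists_bound_inner hu hu) fun x => (hself x).1,
    M.pos _ (exists_bound_inner hu hu) hself⟩

variable [CompleteSpace E]

theorem inner_apply_mul_inv_eq_map {φ ψ : G → E →L[ℂ] E} (hbdd : ∃ C, ∀ x, ‖φ x‖ ≤ C)
    (hψ : ∀ (x : G) (ξ η : E),
      ⟪η, ψ x ξ⟫_ℂ = M.m (fun y => ⟪η, φ (x * y) (ContinuousLinearMap.adjoint (φ y) ξ)⟫_ℂ))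
    (x y : G) (ξ η : E) :
    ⟪ξ, ψ (x * y⁻¹) η⟫_ℂ = M.m (fun z =>
      ⟪ContinuousLinearMap.adjoint (φ (x * z)) ξ, ContinuousLinearMap.adjoint (φ (y * z)) η⟫_ℂ) := by
  have hadj : ∀ z, ⟪ξ, φ (x * y⁻¹ * z) (ContinuousLinearMap.adjoint (φ z) η)⟫_ℂ =
      ⟪ContinuousLinearMap.adjoint (φ (x * y⁻¹ * z)) ξ, ContinuousLinearMap.adjoint (φ z) η⟫_ℂ :=
    fun z => (ContinuousLinearMap.adjoint_inner_left _ _ _).symm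
  rw [hψ, funext hadj, ← M.left_inv y _ (exists_bound_inner
    (exists_bound_adjoint_apply hbdd ξ |>.imp fun C hC z => hC _)
    (exists_bound_adjoint_apply hbdd η))]
  simp only [mul_assoc, inv_mul_cancel_left]

end LeftInvariantMeanC

open scoped InnerProductSpace in
theorem mean_convolution_positive_definite_general
    {G : Type*} [Group G] (M : LeftInvariantMeanC G)
    {H : Type*} [NormedAddCommGroup H] [InnerProductSpace ℂ H] [CompleteSpace H]
    (φ : G → (H →L[ℂ] H)) (hbdd : ∃ C, ∀ x : G, ‖φ x‖ ≤ C)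
    (ψ : G → (H →L[ℂ] H))
    (hψ : ∀ (x : G) (ξ η : H),
      ⟪η, ψ x ξ⟫_ℂ = M.m (fun y => ⟪η, φ (x * y) (ContinuousLinearMap.adjoint (φ y) ξ)⟫_ℂ)) :
    ∀ (F : Finset G) (ξ : G → H),
      (∑ x ∈ F, ∑ y ∈ F, ⟪ξ x, ψ (x * y⁻¹) (ξ y)⟫_ℂ).im = 0 ∧
      0 ≤ (∑ x ∈ F, ∑ y ∈ F, ⟪ξ x, ψ (x * y⁻¹) (ξ y)⟫_ℂ).re := by
  intro F ξ
  have hu : ∀ x, ∃ C, ∀ z, ‖ContinuousLinearMap.adjoint (φ (x * z)) (ξ x)‖ ≤ C := fun x =>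
    (exists_bound_adjoint_apply hbdd (ξ x)).imp fun C hC z => hC _
  have hsum : ∑ x ∈ F, ∑ y ∈ F, ⟪ξ x, ψ (x * y⁻¹) (ξ y)⟫_ℂ =
      M.m (fun z => ⟪∑ x ∈ F, ContinuousLinearMap.adjoint (φ (x * z)) (ξ x),
        ∑ x ∈ F, ContinuousLinearMap.adjoint (φ (x * z)) (ξ x)⟫_ℂ) := by
    rw [M.map_inner_sum_sum F F hu hu]
    exact Finset.sum_congr rfl fun x _ => Finset.sum_congr rfl fun y _ =>
      M.inner_apply_mul_inv_eq_map hbdd hψ x y (ξ x) (ξ y)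
  rw [hsum]
  exact M.im_map_inner_self_eq_zero_and_re_nonneg (exists_bound_finset_sum F _ hu)

open scoped InnerProductSpace in
/-- If `φ : G → B(H)` is uniformly bounded, then the map
`ψ(x) = 𝔼_y φ(xy) φ(y)*` (defined weakly via a left-invariant mean) is positive definite. -/
theorem mean_convolution_positive_definite
    {G : Type*} [Group G] [Countable G] (M : LeftInvariantMeanC G)
    {H : Type*} [NormedAddCommGroup H] [InnerProductSpace ℂ H] [CompleteSpace H]
    (φ : G → (H →L[ℂ] H)) (hbdd : ∃ C, ∀ x : G, ‖φ x‖ ≤ C)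
    (ψ : G → (H →L[ℂ] H))
    (hψ : ∀ (x : G) (ξ η : H),
      ⟪η, ψ x ξ⟫_ℂ = M.m (fun y => ⟪η, φ (x * y) (ContinuousLinearMap.adjoint (φ y) ξ)⟫_ℂ)) :
    ∀ (F : Finset G) (ξ : G → H),
      (∑ x ∈ F, ∑ y ∈ F, ⟪ξ x, ψ (x * y⁻¹) (ξ y)⟫_ℂ).im = 0 ∧
      0 ≤ (∑ x ∈ F, ∑ y ∈ F, ⟪ξ x, ψ (x * y⁻¹) (ξ y)⟫_ℂ).re :=
  mean_convolution_positive_definite_general M φ hbdd ψ hψ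
end

section
/- Let G be a group, let H be a complex Hilbert space, and let φ : G → B(H) be a positive definite map, i.e. for every finite subset F ⊆ G and every family of vectors (ξ_x)_{x ∈ F} in H, the sum ∑_{x,y ∈ F} ⟨φ(x y⁻¹) ξ_y, ξ_x⟩ is a nonnegative real number. Then there exist a complex Hilbert space K, a unitary representation π : G → U(K) (a group homomorphism into the unitary group of B(K)), and a bounded linear map U : H → K such that φ(g) = U* π(g) U for all g ∈ G, and ‖U‖_op² = ‖φ(e)‖_op, where e is the identity element of G. -/
/-!
GNS construction. Positive definiteness of `φ` says exactly that
`⟪ξ, η⟫ := ∑ x, ∑ y, ⟪ξ x, φ (x * y⁻¹) (η y)⟫` is a semi-inner product on `G →₀ H`.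
Right translation preserves it, so it extends to a unitary representation `π` of `G` on the
Hilbert completion `K`. With `U ξ := single 1 ξ` one gets `⟪U ξ, π g (U η)⟫ = ⟪ξ, φ g η⟫`,
i.e. `φ g = U* π g U`, and `‖U‖² = ‖U* U‖ = ‖φ 1‖` is the C*-identity.
-/

noncomputable section

open scoped InnerProductSpace
open Finsupp UniformSpace

namespace LinearIsometryEquiv

variable {𝕜 E F E' : Type*} [NormedField 𝕜] [SeminormedAddCommGroup E] [NormedSpace 𝕜 E]
  [SeminormedAddCommGroup F] [NormedSpace 𝕜 F] [SeminormedAddCommGroup E'] [NormedSpace 𝕜 E']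

def completion (e : E ≃ₗᵢ[𝕜] F) : Completion E ≃ₗᵢ[𝕜] Completion F where
  toLinearMap := (e : E →L[𝕜] F).completion.toLinearMap
  invFun := Completion.map e.symm
  left_inv x := by
    induction x using Completion.induction_on with
    | hp =>
      exact isClosed_eq (Completion.continuous_map.comp Completion.continuous_map) continuous_id
    | ih x =>
      simp [Completion.map_coe e.symm.isometry.uniformContinuous]
  right_inv x := by
    induction x using Completion.induction_on with
    | hp =>
      exact isClosed_eq (Completion.continuous_map.comp Completion.continuous_map) continuous_id
    | ih x =>
      simp [Completion.map_coe e.symm.isometry.uniformContinuous]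
  norm_map' x := by
    induction x using Completion.induction_on with
    | hp => exact isClosed_eq (continuous_norm.comp Completion.continuous_map) continuous_norm
    | ih x => simp

@[simp]
lemma completion_apply_coe (e : E ≃ₗᵢ[𝕜] F) (x : E) : e.completion x = e x :=
  (e : E →L[𝕜] F).completion_apply_coe x

lemma completion_refl : (refl 𝕜 E).completion = refl 𝕜 (Completion E) :=
  ext <| Completion.ext' (completion _).continuous continuous_id fun x => by simp

lemma completion_trans (e : E ≃ₗᵢ[𝕜] F) (f : F ≃ₗᵢ[𝕜] E') :
    (e.trans f).completion = e.completion.trans f.completion :=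
  ext <| Completion.ext' (completion _).continuous
    (e.completion.trans f.completion).continuous fun x => by simp

def completionHom : (E ≃ₗᵢ[𝕜] E) →* (Completion E ≃ₗᵢ[𝕜] Completion E) where
  toFun := completion
  map_one' := completion_refl
  map_mul' f e := completion_trans e f

end LinearIsometryEquiv

section PositiveDefinite

variable {G : Type*} [Group G] {H : Type*} [NormedAddCommGroup H] [InnerProductSpace ℂ H]

def IsPositiveDefinite (φ : G → H →L[ℂ] H) : Prop :=
  ∀ (F : Finset G) (ξ : G → H),
    (∑ x ∈ F, ∑ y ∈ F, ⟪ξ x, φ (x * y⁻¹) (ξ y)⟫_ℂ).im = 0 ∧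
    0 ≤ (∑ x ∈ F, ∑ y ∈ F, ⟪ξ x, φ (x * y⁻¹) (ξ y)⟫_ℂ).re

namespace GNS

variable (φ : G → H →L[ℂ] H)

def form (ξ η : G →₀ H) : ℂ :=
  ξ.sum fun x u => η.sum fun y v => ⟪u, φ (x * y⁻¹) v⟫_ℂ

lemma form_add_left (ξ₁ ξ₂ η : G →₀ H) :
    form φ (ξ₁ + ξ₂) η = form φ ξ₁ η + form φ ξ₂ η :=
  sum_add_index' (by simp) fun _ _ _ => by simp only [inner_add_left, sum_add]

lemma form_add_right (ξ η₁ η₂ : G →₀ H) :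
    form φ ξ (η₁ + η₂) = form φ ξ η₁ + form φ ξ η₂ := by
  simp only [form, ← sum_add]
  refine sum_congr fun _ _ => sum_add_index' (by simp) fun _ _ _ => ?_
  simp only [map_add, inner_add_right]

lemma form_smul_left (c : ℂ) (ξ η : G →₀ H) :
    form φ (c • ξ) η = (starRingEnd ℂ) c * form φ ξ η := by
  rw [form, sum_smul_index' (by simp)]
  simp only [form, inner_smul_left, Finsupp.sum, Finset.mul_sum]

lemma form_smul_right (c : ℂ) (ξ η : G →₀ H) :
    form φ ξ (c • η) = c * form φ ξ η := by
  simp only [form, sum_smul_index', map_zero, inner_zero_right, implies_true]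
  simp only [map_smul, inner_smul_right, Finsupp.sum, Finset.mul_sum]

lemma form_single_single (x y : G) (u v : H) :
    form φ (single x u) (single y v) = ⟪u, φ (x * y⁻¹) v⟫_ℂ := by
  simp [form]

lemma form_equivMapDomain_mulRight (g : G) (ξ η : G →₀ H) :
    form φ (equivMapDomain (Equiv.mulRight g) ξ) (equivMapDomain (Equiv.mulRight g) η) =
      form φ ξ η := by
  simp [form, sum_equivMapDomain, mul_assoc]

end GNS

namespace IsPositiveDefinite

open GNS

variable {φ : G → H →L[ℂ] H}

lemma im_form_self (hφ : IsPositiveDefinite φ) (ξ : G →₀ H) :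
    (form φ ξ ξ).im = 0 :=
  (hφ ξ.support ξ).1

lemma re_form_self_nonneg (hφ : IsPositiveDefinite φ) (ξ : G →₀ H) :
    0 ≤ (form φ ξ ξ).re :=
  (hφ ξ.support ξ).2

/-- Polarization: a sesquilinear form with real diagonal is Hermitian. -/
lemma conj_form (hφ : IsPositiveDefinite φ) (ξ η : G →₀ H) :
    starRingEnd ℂ (form φ η ξ) = form φ ξ η := by
  have hξ := hφ.im_form_self ξ
  have hη := hφ.im_form_self η
  have h₁ := hφ.im_form_self (ξ + η)
  have h₂ := hφ.im_form_self (ξ + Complex.I • η)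
  simp only [form_add_left, form_add_right, form_smul_left, form_smul_right, Complex.conj_I,
    Complex.add_im, Complex.add_re, Complex.mul_im, Complex.mul_re, Complex.neg_re,
    Complex.neg_im, Complex.I_re, Complex.I_im, neg_mul, neg_zero, one_mul, zero_mul, mul_zero,
    sub_zero, zero_add, add_zero, hξ, hη] at h₁ h₂
  apply Complex.ext <;> simp only [Complex.conj_re, Complex.conj_im] <;> linarith

end IsPositiveDefinite

namespace GNS

variable {φ : G → H →L[ℂ] H}

/-- `G →₀ H` with the semi-inner product `form φ`; the parameter only selects the instances. -/
def PreSpace (_φ : G → H →L[ℂ] H) : Type _ := G →₀ H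

instance : AddCommGroup (PreSpace φ) := inferInstanceAs (AddCommGroup (G →₀ H))

instance : Module ℂ (PreSpace φ) := inferInstanceAs (Module ℂ (G →₀ H))

variable [Fact (IsPositiveDefinite φ)]

instance : PreInnerProductSpace.Core ℂ (PreSpace φ) where
  inner := form φ
  conj_inner_symm := (Fact.out : IsPositiveDefinite φ).conj_form
  re_inner_nonneg := (Fact.out : IsPositiveDefinite φ).re_form_self_nonneg
  add_left := form_add_left φ
  smul_left ξ η c := form_smul_left φ c ξ η

instance : SeminormedAddCommGroup (PreSpace φ) :=
  InnerProductSpace.Core.toSeminormedAddCommGroup (𝕜 := ℂ)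

instance : InnerProductSpace ℂ (PreSpace φ) := .ofCore _

variable (φ) in
def rightTranslation : G →* (PreSpace φ ≃ₗᵢ[ℂ] PreSpace φ) where
  toFun g := LinearEquiv.isometryOfInner
    (Finsupp.domLCongr (Equiv.mulRight g⁻¹) : PreSpace φ ≃ₗ[ℂ] PreSpace φ)
    (form_equivMapDomain_mulRight φ g⁻¹)
  map_one' := LinearIsometryEquiv.ext fun (ξ : G →₀ H) => Finsupp.ext fun x =>
    show ξ (x * 1⁻¹⁻¹) = ξ x by simp
  map_mul' g h := LinearIsometryEquiv.ext fun (ξ : G →₀ H) => Finsupp.ext fun x =>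
    show ξ (x * (g * h)⁻¹⁻¹) = ξ (x * g⁻¹⁻¹ * h⁻¹⁻¹) by simp [mul_assoc]

variable (φ) in
def single (x : G) : H →ₗ[ℂ] PreSpace φ := lsingle x

lemma inner_single_single (x y : G) (u v : H) :
    ⟪single φ x u, single φ y v⟫_ℂ = ⟪u, φ (x * y⁻¹) v⟫_ℂ :=
  form_single_single φ x y u v

lemma rightTranslation_single (g x : G) (u : H) :
    rightTranslation φ g (single φ x u) = single φ (x * g⁻¹) u :=
  equivMapDomain_single _ _ _

variable (φ)

abbrev Space : Type _ := Completion (PreSpace φ)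

def unitaryRep : G →* unitary (Space φ →L[ℂ] Space φ) :=
  Unitary.linearIsometryEquiv.symm.toMonoidHom.comp
    (LinearIsometryEquiv.completionHom.comp (rightTranslation φ))

lemma unitaryRep_coe (g : G) (ξ : PreSpace φ) :
    (unitaryRep φ g : Space φ →L[ℂ] Space φ) ξ = rightTranslation φ g ξ := by
  simp [unitaryRep, LinearIsometryEquiv.completionHom]

lemma norm_single_one_le (ξ : H) : ‖single φ 1 ξ‖ ≤ √‖φ 1‖ * ‖ξ‖ := by
  have h : ‖single φ 1 ξ‖ ^ 2 ≤ (√‖φ 1‖ * ‖ξ‖) ^ 2 := calc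
    ‖single φ 1 ξ‖ ^ 2 = (⟪ξ, φ 1 ξ⟫_ℂ).re := by
      rw [@norm_sq_eq_re_inner ℂ, inner_single_single, mul_inv_cancel]; rfl
    _ ≤ ‖ξ‖ * ‖φ 1 ξ‖ := (Complex.re_le_norm _).trans (norm_inner_le_norm _ _)
    _ ≤ ‖ξ‖ * (‖φ 1‖ * ‖ξ‖) := by gcongr; exact (φ 1).le_opNorm ξ
    _ = (√‖φ 1‖ * ‖ξ‖) ^ 2 := by rw [mul_pow, Real.sq_sqrt (norm_nonneg _)]; ring
  exact le_of_sq_le_sq h (by positivity)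

def embedding : H →L[ℂ] Space φ :=
  Completion.toComplL.comp
    ((single φ 1).mkContinuous √‖φ 1‖ (norm_single_one_le φ))

lemma embedding_apply (ξ : H) : embedding φ ξ = single φ 1 ξ := rfl

lemma inner_embedding_unitaryRep_embedding (g : G) (ξ η : H) :
    ⟪embedding φ ξ, (unitaryRep φ g : Space φ →L[ℂ] Space φ) (embedding φ η)⟫_ℂ =
      ⟪ξ, φ g η⟫_ℂ := by
  rw [embedding_apply, embedding_apply, unitaryRep_coe, rightTranslation_single,
    Completion.inner_coe, inner_single_single, one_mul, one_mul, inv_inv]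

theorem adjoint_embedding_comp_unitaryRep_comp_embedding [CompleteSpace H] (g : G) :
    (embedding φ).adjoint ∘L ((unitaryRep φ g : Space φ →L[ℂ] Space φ) ∘L embedding φ) = φ g := by
  ext η
  refine ext_inner_left ℂ fun ξ => ?_
  simp only [ContinuousLinearMap.comp_apply, ContinuousLinearMap.adjoint_inner_right,
    inner_embedding_unitaryRep_embedding]

theorem norm_embedding_sq [CompleteSpace H] : ‖embedding φ‖ ^ 2 = ‖φ 1‖ := by
  rw [← adjoint_embedding_comp_unitaryRep_comp_embedding φ 1, map_one, OneMemClass.coe_one,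
    ContinuousLinearMap.one_def, ContinuousLinearMap.id_comp,
    ContinuousLinearMap.norm_adjoint_comp_self, sq]

end GNS
end PositiveDefinite

open scoped InnerProductSpace in
/-- **Stinespring/GNS dilation** for positive definite operator-valued maps on groups:
a positive definite map `φ : G → B(H)` dilates to a unitary representation
`π : G → U(K)` on a Hilbert space `K`, i.e. `φ(g) = U* π(g) U` for a bounded operator
`U : H → K` with `‖U‖² = ‖φ(e)‖`. -/
theorem stinespring_dilation_of_positive_definite
    {G : Type v} [Group G]
    {H : Type u} [NormedAddCommGroup H] [InnerProductSpace ℂ H] [CompleteSpace H]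
    (φ : G → (H →L[ℂ] H))
    (hpd : ∀ (F : Finset G) (ξ : G → H),
      (∑ x ∈ F, ∑ y ∈ F, ⟪ξ x, φ (x * y⁻¹) (ξ y)⟫_ℂ).im = 0 ∧
      0 ≤ (∑ x ∈ F, ∑ y ∈ F, ⟪ξ x, φ (x * y⁻¹) (ξ y)⟫_ℂ).re) :
    ∃ (K : Type (max u v)) (_ : NormedAddCommGroup K) (_ : InnerProductSpace ℂ K)
      (_ : CompleteSpace K) (π : G →* unitary (K →L[ℂ] K)) (U : H →L[ℂ] K),
      (∀ g : G, φ g = ContinuousLinearMap.adjoint U ∘L ((π g : K →L[ℂ] K) ∘L U)) ∧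
      ‖U‖ ^ 2 = ‖φ 1‖ := by
  have : Fact (IsPositiveDefinite φ) := ⟨hpd⟩
  exact ⟨GNS.Space φ, inferInstance, inferInstance, inferInstance, GNS.unitaryRep φ,
    GNS.embedding φ, fun g => (GNS.adjoint_embedding_comp_unitaryRep_comp_embedding φ g).symm,
    GNS.norm_embedding_sq φ⟩
end
end

section
/- Let H be a complex Hilbert space and let N : B(H) → ℝ be a unitarily invariant seminorm. Then for every T ∈ B(H) one has N(T*T) = N(TT*). -/
/-!
Everything rests on the ideal property `N (a X b) ≤ N X` for contractions `a, b`. It comes from a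
Russo–Dye type decomposition: an invertible element of norm `≤ 2` is a sum of two unitaries (via
its polar decomposition), and `u + c = u (1 + u⋆ c)` for a unitary `u`, so for `‖c‖ < 1` the
multiple `n • c` is a sum of `n + 2` unitaries, and for `‖c‖ ≤ 1` (apply this to
`(n / (n + 1)) • c`) a sum of `n + 3`. Expanding `(n • a) X (n • b)` then gives
`n² N (a X b) ≤ (n + 3)² N X` for all `n`.

With `u = T (T⋆T + ε)^(-1/2)` one has `‖u‖ ≤ 1` and `T T⋆ = u (T⋆T) u⋆ + ε u u⋆`,
hence `N (T T⋆) ≤ N (T⋆T) + ε N 1`. Letting `ε → 0`, and exchanging `T` and `T⋆`,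
gives equality.
-/

/-- A unitarily invariant seminorm on `B(H)`: a nonnegative, subadditive, absolutely
homogeneous function `N` with `N (U T V) = N T` for all unitaries `U, V`. -/
structure UnitarilyInvariantSeminorm (H : Type*) [NormedAddCommGroup H]
    [InnerProductSpace ℂ H] [CompleteSpace H] where
  N : (H →L[ℂ] H) → ℝ
  nonneg : ∀ T, 0 ≤ N T
  add_le : ∀ S T, N (S + T) ≤ N S + N T
  smul : ∀ (c : ℂ) (T : H →L[ℂ] H), N (c • T) = ‖c‖ * N T
  unitary_invariant : ∀ U V T : H →L[ℂ] H, U ∈ unitary (H →L[ℂ] H) →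
    V ∈ unitary (H →L[ℂ] H) → N (U * T * V) = N T

open Filter Topology

lemma le_of_forall_nat_sq_mul_le {α β : ℝ} (k : ℝ)
    (h : ∀ n : ℕ, (n : ℝ) ^ 2 * α ≤ (n + k) ^ 2 * β) : α ≤ β := by
  have hlim : Tendsto (fun n : ℕ => (1 + k / n) ^ 2 * β) atTop (𝓝 β) := by
    simpa using ((tendsto_const_div_atTop_nhds_zero_nat k).const_add 1).pow 2 |>.mul_const β
  refine ge_of_tendsto hlim ((eventually_gt_atTop 0).mono fun n hn => ?_)
  have hn : (0 : ℝ) < n := Nat.cast_pos.mpr hn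
  rw [one_add_div hn.ne', div_pow, div_mul_eq_mul_div, le_div_iff₀ (by positivity), mul_comm]
  exact h n

namespace CStarAlgebra

variable {A : Type*} [CStarAlgebra A]

lemma _root_.IsSelfAdjoint.exists_unitary_add_eq {h : A} (hh : IsSelfAdjoint h)
    (hn : ‖h‖ ≤ 2) : ∃ u v : unitary A, (u + v : A) = h := by
  let _ := CStarAlgebra.spectralOrder A
  have _ := CStarAlgebra.spectralOrderedRing A
  let k : selfAdjoint A := (2⁻¹ : ℝ) • ⟨h, hh⟩
  have hk : ‖k‖ ≤ 1 := by
    change ‖(2⁻¹ : ℝ) • h‖ ≤ 1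
    rw [norm_smul]
    norm_num
    linarith
  let u := selfAdjoint.unitarySelfAddISMul k hk
  refine ⟨u, star u, ?_⟩
  have hre : (2⁻¹ : ℝ) • ((u : A) + star u) = (2⁻¹ : ℝ) • h := by
    rw [Unitary.coe_star, ← realPart_apply_coe, selfAdjoint.realPart_unitarySelfAddISMul]
    rfl
  exact smul_right_injective A (by norm_num) hre

lemma _root_.IsUnit.exists_unitary_add_eq {x : A} (hx : IsUnit x) (hn : ‖x‖ ≤ 2) :
    ∃ u v : unitary A, (u + v : A) = x := by
  let _ := CStarAlgebra.spectralOrder A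
  have _ := CStarAlgebra.spectralOrderedRing A
  set s := CFC.sqrt (star x * x)
  have hs : IsUnit s := (CFC.isUnit_sqrt_iff _).mpr (hx.star.mul hx)
  have hss : s * s = star x * x := CFC.sqrt_mul_sqrt_self _
  have hs_sa : IsSelfAdjoint s := (CFC.sqrt_nonneg _).isSelfAdjoint
  have hs_norm : ‖s‖ = ‖x‖ := (mul_self_inj (norm_nonneg _) (norm_nonneg _)).mp <| by
    rw [← CStarRing.norm_star_mul_self, ← CStarRing.norm_star_mul_self, hs_sa.star_eq, hss]
  let w : unitary A := ⟨x * ↑hs.unit⁻¹, (Units.mul_inv_mem_unitary hx.unit hs.unit).mpr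
    (by ext; simp [hs_sa.star_eq, hss])⟩
  obtain ⟨u, v, huv⟩ := hs_sa.exists_unitary_add_eq (hs_norm ▸ hn)
  refine ⟨w * u, w * v, ?_⟩
  simp [w, ← mul_add, huv, mul_assoc]

lemma exists_unitary_add_eq_unitary_add (u : unitary A) {c : A} (hc : ‖c‖ < 1) :
    ∃ v w : unitary A, (v + w : A) = u + c := by
  nontriviality A
  have hd : ‖-(star (u : A) * c)‖ < 1 := by
    rwa [norm_neg, ← Unitary.coe_star, CStarRing.norm_coe_unitary_mul]
  have hd2 : ‖1 - -(star (u : A) * c)‖ ≤ 2 := by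
    grw [norm_sub_le, CStarRing.norm_one, hd]
    norm_num
  obtain ⟨p, q, hpq⟩ := (isUnit_one_sub_of_norm_lt_one hd).exists_unitary_add_eq hd2
  refine ⟨u * p, u * q, ?_⟩
  rw [Submonoid.coe_mul, Submonoid.coe_mul, ← mul_add, hpq, sub_neg_eq_add, mul_add, mul_one,
    ← mul_assoc, Unitary.mul_star_self_of_mem u.2, one_mul]

lemma exists_sum_unitary_eq_nsmul_of_norm_lt_one {c : A} (hc : ‖c‖ < 1) (n : ℕ) :
    ∃ f : Fin (n + 2) → unitary A, ∑ i, (f i : A) = n • c := by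
  induction n with
  | zero => exact ⟨![1, -1], by simp [Fin.sum_univ_two, Unitary.coe_neg]⟩
  | succ n ih =>
    obtain ⟨f, hf⟩ := ih
    obtain ⟨v, w, hvw⟩ := exists_unitary_add_eq_unitary_add (f 0) hc
    refine ⟨Fin.cons v (Fin.cons w (Fin.tail f)), ?_⟩
    rw [Fin.sum_univ_succ, Fin.sum_univ_succ, succ_nsmul, ← hf,
      Fin.sum_univ_succ (fun i => (f i : A))]
    simp only [Fin.cons_zero, Fin.cons_succ, Fin.tail]
    rw [← add_assoc, hvw]
    abel

lemma exists_sum_unitary_eq_nsmul {c : A} (hc : ‖c‖ ≤ 1) (n : ℕ) :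
    ∃ f : Fin (n + 3) → unitary A, ∑ i, (f i : A) = n • c := by
  have hn : (0 : ℝ) < n + 1 := by positivity
  have hc' : ‖(n / (n + 1) : ℝ) • c‖ < 1 := by
    rw [norm_smul, Real.norm_of_nonneg (by positivity), div_mul_eq_mul_div, div_lt_one hn]
    nlinarith [norm_nonneg c]
  obtain ⟨f, hf⟩ := exists_sum_unitary_eq_nsmul_of_norm_lt_one hc' (n + 1)
  refine ⟨f, hf.trans ?_⟩
  rw [← Nat.cast_smul_eq_nsmul ℝ, ← Nat.cast_smul_eq_nsmul ℝ, smul_smul]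
  congr 1
  push_cast
  field_simp

lemma exists_norm_le_one_mul_star_self_eq (x : A) {ε : ℝ} (hε : 0 < ε) :
    ∃ u : A, ‖u‖ ≤ 1 ∧ x * star x = u * (star x * x) * star u + ε • (u * star u) := by
  let _ := CStarAlgebra.spectralOrder A
  have _ := CStarAlgebra.spectralOrderedRing A
  have hε' : IsStrictlyPositive (algebraMap ℝ A ε) := isStrictlyPositive_algebraMap hε
  set b := star x * x + algebraMap ℝ A ε
  have hb : IsStrictlyPositive b := hε'.nonneg_add (star_mul_self_nonneg x)
  set r := b ^ (-(1 / 2) : ℝ)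
  have hr : IsSelfAdjoint r := CFC.rpow_nonneg.isSelfAdjoint
  have hrbr : r * b * r = 1 := CFC.conjugate_rpow_neg_one_half b
  refine ⟨x * r, ?_, ?_⟩
  · have hle : star (x * r) * (x * r) ≤ 1 := by
      rw [← hrbr, star_mul, hr.star_eq]
      simpa only [mul_assoc] using
        hr.conjugate_le_conjugate (le_add_of_nonneg_right hε'.nonneg : star x * x ≤ b)
    rw [← CStarAlgebra.norm_le_one_iff_of_nonneg _ (star_mul_self_nonneg _),
      CStarRing.norm_star_mul_self] at hle
    nlinarith [norm_nonneg (x * r)]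
  · calc x * star x = x * (r * b * r) * star x := by rw [hrbr, mul_one]
      _ = _ := by
        simp only [b, star_mul, hr.star_eq, Algebra.algebraMap_eq_smul_one, mul_add, add_mul,
          mul_assoc, smul_mul_assoc, mul_smul_comm, one_mul]

end CStarAlgebra

namespace UnitarilyInvariantSeminorm

variable {H : Type*} [NormedAddCommGroup H] [InnerProductSpace ℂ H] [CompleteSpace H]
  (𝒩 : UnitarilyInvariantSeminorm H)

lemma map_zero : 𝒩.N 0 = 0 := by
  simpa using 𝒩.smul 0 0

lemma map_sum_le {ι : Type*} (s : Finset ι) (f : ι → H →L[ℂ] H) :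
    𝒩.N (∑ i ∈ s, f i) ≤ ∑ i ∈ s, 𝒩.N (f i) :=
  Finset.le_sum_of_subadditive 𝒩.N 𝒩.map_zero.le 𝒩.add_le s f

lemma map_nsmul (n : ℕ) (X : H →L[ℂ] H) : 𝒩.N (n • X) = n * 𝒩.N X := by
  rw [← Nat.cast_smul_eq_nsmul ℂ, 𝒩.smul, Complex.norm_natCast]

lemma map_real_smul {r : ℝ} (hr : 0 ≤ r) (X : H →L[ℂ] H) :
    𝒩.N (r • X) = r * 𝒩.N X := by
  rw [← Complex.coe_smul, 𝒩.smul, Complex.norm_real, Real.norm_of_nonneg hr]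

lemma map_mul_mul_le {a b : H →L[ℂ] H} (ha : ‖a‖ ≤ 1) (hb : ‖b‖ ≤ 1)
    (X : H →L[ℂ] H) : 𝒩.N (a * X * b) ≤ 𝒩.N X := by
  refine le_of_forall_nat_sq_mul_le 3 fun n => ?_
  obtain ⟨f, hf⟩ := CStarAlgebra.exists_sum_unitary_eq_nsmul ha n
  obtain ⟨g, hg⟩ := CStarAlgebra.exists_sum_unitary_eq_nsmul hb n
  calc (n : ℝ) ^ 2 * 𝒩.N (a * X * b) = 𝒩.N ((n • a) * X * (n • b)) := by
        simp only [smul_mul_assoc, mul_smul_comm, smul_smul, 𝒩.map_nsmul]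
        push_cast
        ring
    _ = 𝒩.N (∑ i, ∑ j, (f i : H →L[ℂ] H) * X * g j) := by
        rw [← hf, ← hg, Finset.sum_mul, Finset.sum_mul_sum]
    _ ≤ ∑ i, ∑ j, 𝒩.N ((f i : H →L[ℂ] H) * X * g j) :=
        (𝒩.map_sum_le _ _).trans (Finset.sum_le_sum fun i _ => 𝒩.map_sum_le _ _)
    _ = (n + 3) ^ 2 * 𝒩.N X := by
        simp [𝒩.unitary_invariant _ _ X (f _).2 (g _).2]
        ring

lemma map_mul_star_self_le (T : H →L[ℂ] H) : 𝒩.N (T * star T) ≤ 𝒩.N (star T * T) := by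
  have key : ∀ ε > 0, 𝒩.N (T * star T) ≤ 𝒩.N (star T * T) + ε * 𝒩.N 1 := by
    intro ε hε
    obtain ⟨u, hu, hT⟩ := CStarAlgebra.exists_norm_le_one_mul_star_self_eq T hε
    have hu' : ‖star u‖ ≤ 1 := by rwa [norm_star]
    calc 𝒩.N (T * star T)
        ≤ 𝒩.N (u * (star T * T) * star u) + 𝒩.N (ε • (u * 1 * star u)) := by
          rw [hT, mul_one]; exact 𝒩.add_le _ _
      _ ≤ 𝒩.N (star T * T) + ε * 𝒩.N 1 := by
          rw [𝒩.map_real_smul hε.le]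
          gcongr <;> exact 𝒩.map_mul_mul_le hu hu' _
  refine ge_of_tendsto (x := 𝓝[>] 0) ?_ (eventually_nhdsWithin_of_forall key)
  refine tendsto_nhdsWithin_of_tendsto_nhds ?_
  simpa using ((continuous_mul_const (𝒩.N 1)).tendsto 0).const_add (𝒩.N (star T * T))

end UnitarilyInvariantSeminorm

/-- For a unitarily invariant seminorm `N` on `B(H)`: `N (T* T) = N (T T*)`. -/
theorem uiSeminorm_star_mul_self
    {H : Type*} [NormedAddCommGroup H] [InnerProductSpace ℂ H] [CompleteSpace H]
    (𝒩 : UnitarilyInvariantSeminorm H) (T : H →L[ℂ] H) :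
    𝒩.N (star T * T) = 𝒩.N (T * star T) :=
  le_antisymm (by simpa using 𝒩.map_mul_star_self_le (star T)) (𝒩.map_mul_star_self_le T)
end

section
/- Let H be a complex Hilbert space and let N : B(H) → ℝ be a unitarily invariant seminorm. If R, S ∈ B(H) satisfy 0 ≤ R ≤ S (in the Loewner order), then N(R) ≤ N(S). -/
/-! Perturbing by `ε • 1` reduces the claim to `R ≤ S` with `R` invertible. Then
`R = D * S * star D` for `D = √R * S ^ (-1/2)`, an invertible contraction. An invertible
contraction `X = W * |X|` (polar decomposition, `W` unitary) is the mean of two unitaries, since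
the positive contraction `|X|` is the real part of the unitary `|X| + i √(1 - |X|²)`. Unitary
invariance and the triangle inequality then give `N (X * T * Y) ≤ N T` for invertible
contractions `X`, `Y`, hence `N R ≤ N S`. -/

open Filter Topology
open scoped ComplexStarModule

section CStarAlgebra

variable {A : Type*} [CStarAlgebra A] [PartialOrder A] [StarOrderedRing A]

lemma IsSelfAdjoint.exists_mem_unitary_eq_two_inv_smul_add_star {a : A} (ha : IsSelfAdjoint a)
    (ha_norm : ‖a‖ ≤ 1) : ∃ u ∈ unitary A, a = (2⁻¹ : ℂ) • (u + star u) := by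
  let u := selfAdjoint.unitarySelfAddISMul ⟨a, ha⟩ ha_norm
  refine ⟨u, u.2, ?_⟩
  calc a = ℜ (u : A) :=
        congrArg Subtype.val (selfAdjoint.realPart_unitarySelfAddISMul ⟨a, ha⟩ ha_norm).symm
    _ = (2⁻¹ : ℂ) • (u + star u) := by rw [realPart_apply_coe, ← Complex.coe_smul]; norm_num

lemma IsUnit.exists_mem_unitary_eq_mul_cfcAbs {x : A} (hx : IsUnit x) :
    ∃ w ∈ unitary A, x = w * CFC.abs x := by
  have habs : IsUnit (CFC.abs x) :=
    CFC.isUnit_sqrt_iff_isStrictlyPositive.mpr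
      ((hx.star.mul hx).isStrictlyPositive (star_mul_self_nonneg x))
  refine ⟨x * Ring.inverse (CFC.abs x), (hx.mul habs.ringInverse).mem_unitary_of_star_mul_self ?_,
    by rw [mul_assoc, Ring.inverse_mul_cancel _ habs, mul_one]⟩
  rw [star_mul, ← Ring.inverse_star, (CFC.abs_nonneg x).isSelfAdjoint.star_eq, mul_assoc,
    ← mul_assoc (star x), ← CFC.abs_mul_abs, ← mul_assoc, ← mul_assoc,
    Ring.inverse_mul_cancel _ habs, one_mul, Ring.mul_inverse_cancel _ habs]

lemma IsUnit.exists_mem_unitary_eq_two_inv_smul_add {x : A} (hx : IsUnit x) (hx_norm : ‖x‖ ≤ 1) :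
    ∃ u ∈ unitary A, ∃ v ∈ unitary A, x = (2⁻¹ : ℂ) • (u + v) := by
  obtain ⟨w, hw, hpolar⟩ := hx.exists_mem_unitary_eq_mul_cfcAbs
  obtain ⟨u, hu, habs⟩ :=
    (CFC.abs_nonneg x).isSelfAdjoint.exists_mem_unitary_eq_two_inv_smul_add_star
      (CFC.norm_abs.trans_le hx_norm)
  refine ⟨w * u, mul_mem hw hu, w * star u, mul_mem hw (Unitary.star_mem hu), ?_⟩
  rw [hpolar, habs, mul_smul_comm, mul_add]

end CStarAlgebra

namespace UnitarilyInvariantSeminorm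

variable {H : Type*} [NormedAddCommGroup H] [InnerProductSpace ℂ H] [CompleteSpace H]
  (𝒩 : UnitarilyInvariantSeminorm H)

lemma N_real_smul (r : ℝ) (T : H →L[ℂ] H) : 𝒩.N (r • T) = |r| * 𝒩.N T := by
  rw [← Complex.coe_smul, 𝒩.smul, Complex.norm_real, Real.norm_eq_abs]

lemma N_add_smul_one_le (T : H →L[ℂ] H) (r : ℝ) : 𝒩.N (T + r • 1) ≤ 𝒩.N T + |r| * 𝒩.N 1 :=
  (𝒩.add_le _ _).trans_eq (by rw [N_real_smul])

lemma N_le_add_smul_one (T : H →L[ℂ] H) (r : ℝ) : 𝒩.N T ≤ 𝒩.N (T + r • 1) + |r| * 𝒩.N 1 := by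
  simpa [abs_neg, add_assoc, ← add_smul] using 𝒩.N_add_smul_one_le (T + r • 1) (-r)

lemma N_two_inv_smul_add_le {S T X : H →L[ℂ] H} (hS : 𝒩.N S ≤ 𝒩.N X) (hT : 𝒩.N T ≤ 𝒩.N X) :
    𝒩.N ((2⁻¹ : ℂ) • (S + T)) ≤ 𝒩.N X := by
  rw [𝒩.smul, show ‖(2⁻¹ : ℂ)‖ = 2⁻¹ by norm_num]
  linarith [𝒩.add_le S T]

lemma N_mul_mul_le {X Y : H →L[ℂ] H} (hX : IsUnit X) (hX_norm : ‖X‖ ≤ 1) (hY : IsUnit Y)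
    (hY_norm : ‖Y‖ ≤ 1) (T : H →L[ℂ] H) : 𝒩.N (X * T * Y) ≤ 𝒩.N T := by
  obtain ⟨u₁, hu₁, u₂, hu₂, rfl⟩ := hX.exists_mem_unitary_eq_two_inv_smul_add hX_norm
  obtain ⟨v₁, hv₁, v₂, hv₂, rfl⟩ := hY.exists_mem_unitary_eq_two_inv_smul_add hY_norm
  have hleft : ∀ u ∈ unitary (H →L[ℂ] H), 𝒩.N (u * T * (2⁻¹ : ℂ) • (v₁ + v₂)) ≤ 𝒩.N T := by
    intro u hu
    rw [mul_smul_comm, mul_add]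
    exact 𝒩.N_two_inv_smul_add_le (𝒩.unitary_invariant _ _ _ hu hv₁).le
      (𝒩.unitary_invariant _ _ _ hu hv₂).le
  rw [smul_mul_assoc, smul_mul_assoc, add_mul, add_mul]
  exact 𝒩.N_two_inv_smul_add_le (hleft u₁ hu₁) (hleft u₂ hu₂)

lemma N_le_of_le_of_isStrictlyPositive {a b : H →L[ℂ] H} (ha : IsStrictlyPositive a)
    (hab : a ≤ b) : 𝒩.N a ≤ 𝒩.N b := by
  have hb : IsStrictlyPositive b := ha.of_le hab
  set d := CFC.sqrt a * b ^ (-(1 / 2) : ℝ)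
  have hd : IsUnit d := ha.isUnit_cfcSqrt.mul (IsStrictlyPositive.rpow b _ hb).isUnit
  have hd_norm : ‖d‖ ≤ 1 := (le_iff_norm_sqrt_mul_rpow a b).mp hab
  have hconj : d * b * star d = a := by
    rw [star_mul, (CFC.sqrt_nonneg a).isSelfAdjoint.star_eq, CFC.rpow_nonneg.isSelfAdjoint.star_eq]
    calc CFC.sqrt a * b ^ (-(1 / 2) : ℝ) * b * (b ^ (-(1 / 2) : ℝ) * CFC.sqrt a)
        = CFC.sqrt a * (b ^ (-(1 / 2) : ℝ) * b * b ^ (-(1 / 2) : ℝ)) * CFC.sqrt a := by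
          simp only [mul_assoc]
      _ = a := by rw [CFC.conjugate_rpow_neg_one_half b, mul_one, CFC.sqrt_mul_sqrt_self a]
  calc 𝒩.N a = 𝒩.N (d * b * star d) := by rw [hconj]
    _ ≤ 𝒩.N b := 𝒩.N_mul_mul_le hd hd_norm hd.star (by rwa [norm_star]) b

end UnitarilyInvariantSeminorm

/-- A unitarily invariant seminorm on `B(H)` is monotone on positive operators:
if `0 ≤ R ≤ S` then `N R ≤ N S`. -/
theorem uiSeminorm_monotone
    {H : Type*} [NormedAddCommGroup H] [InnerProductSpace ℂ H] [CompleteSpace H]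
    (𝒩 : UnitarilyInvariantSeminorm H) (R S : H →L[ℂ] H)
    (hR : 0 ≤ R) (hRS : R ≤ S) :
    𝒩.N R ≤ 𝒩.N S := by
  have hperturbed : ∀ ε > 0, 𝒩.N R ≤ 𝒩.N S + 2 * ε * 𝒩.N 1 := by
    intro ε hε
    have hRε : IsStrictlyPositive (R + ε • 1) :=
      IsStrictlyPositive.nonneg_add hR (isStrictlyPositive_one.smul hε)
    have hmono := 𝒩.N_le_of_le_of_isStrictlyPositive hRε (add_le_add_left hRS _)
    have hR' := 𝒩.N_le_add_smul_one R ε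
    have hS' := 𝒩.N_add_smul_one_le S ε
    rw [abs_of_pos hε] at hR' hS'
    linarith
  have hlim : Tendsto (fun ε : ℝ ↦ 𝒩.N S + 2 * ε * 𝒩.N 1) (𝓝[>] 0) (𝓝 (𝒩.N S)) :=
    tendsto_nhdsWithin_of_tendsto_nhds ((by fun_prop : Continuous _).tendsto' _ _ (by simp))
  exact ge_of_tendsto hlim (eventually_nhdsWithin_of_forall hperturbed)
end

section
/- Let G be a (countable, discrete) group, let m be a symmetric bi-invariant mean on the bounded complex-valued functions on G, let n ≥ 1, and let φ : G → M_n(ℂ) satisfy ‖φ(x)‖_op ≤ 1 for all x ∈ G. Then the iterated mean m_x(m_y(m_z(tr(φ(x) φ(y)* φ(yz) φ(xz)*)))) is a nonnegative real number (its imaginary part is 0 and its real part is ≥ 0). -/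
open Matrix

/-- A symmetric bi-invariant mean on the bounded complex-valued functions on `G`:
a linear functional `m` with `m 1 = 1`, `m f` real for real-valued `f`, `m f ≥ 0` for
pointwise nonnegative (real-valued) `f`, invariance under left and right translations,
and invariance under inversion. -/
structure SymmetricBiInvariantMean (G : Type*) [Group G] where
  m : (G → ℂ) → ℂ
  add : ∀ f g : G → ℂ, (∃ C, ∀ x, ‖f x‖ ≤ C) → (∃ C, ∀ x, ‖g x‖ ≤ C) →
    m (fun x => f x + g x) = m f + m g
  smul : ∀ (c : ℂ) (f : G → ℂ), (∃ C, ∀ x, ‖f x‖ ≤ C) →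
    m (fun x => c * f x) = c * m f
  one : m (fun _ => 1) = 1
  real : ∀ f : G → ℂ, (∃ C, ∀ x, ‖f x‖ ≤ C) → (∀ x, (f x).im = 0) → (m f).im = 0
  pos : ∀ f : G → ℂ, (∃ C, ∀ x, ‖f x‖ ≤ C) → (∀ x, (f x).im = 0 ∧ 0 ≤ (f x).re) →
    0 ≤ (m f).re
  left_inv : ∀ (g : G) (f : G → ℂ), (∃ C, ∀ x, ‖f x‖ ≤ C) →
    m (fun x => f (g * x)) = m f
  right_inv : ∀ (g : G) (f : G → ℂ), (∃ C, ∀ x, ‖f x‖ ≤ C) →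
    m (fun x => f (x * g)) = m f
  symm : ∀ f : G → ℂ, (∃ C, ∀ x, ‖f x‖ ≤ C) → m (fun x => f x⁻¹) = m f

/-- The operator norm of a complex `n × n` matrix, viewed as an operator
`ℓ²(Fin n) → ℓ²(Fin n)`. -/
noncomputable def matOpNorm {n : ℕ} (A : Matrix (Fin n) (Fin n) ℂ) : ℝ :=
  ‖Matrix.toEuclideanCLM (𝕜 := ℂ) A‖

/-!
The inner mean `m_z tr(φ(x) φ(y)ᴴ φ(yz) φ(xz)ᴴ)` equals `⟪ψ_x, ψ_y⟫` for `ψ_x = (z ↦ φ(x)ᴴ φ(xz))`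
in `ℓ^∞(G, Mₙ(ℂ))` with the semi-inner product `⟪F, K⟫ = m_z tr(F(z)ᴴ K(z))`. In the Hilbert
completion of this space `u ↦ m_x ⟪ψ_x, u⟫` is a bounded linear functional, so by Riesz it is
`⟪w, ·⟫` for some `w`, and then `m_x m_y ⟪ψ_x, ψ_y⟫ = m_x ⟪ψ_x, w⟫ = ⟪w, w⟫ ≥ 0`.
-/

open ComplexConjugate
open scoped InnerProductSpace ComplexOrder ENNReal Matrix.Norms.L2Operator

theorem exists_norm_ofReal_re_le {G : Type*} {f : G → ℂ} (hf : ∃ C, ∀ x, ‖f x‖ ≤ C) :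
    ∃ C, ∀ x, ‖((f x).re : ℂ)‖ ≤ C :=
  hf.imp fun _ hC x => by simpa using (Complex.abs_re_le_norm _).trans (hC x)

theorem exists_norm_ofReal_im_le {G : Type*} {f : G → ℂ} (hf : ∃ C, ∀ x, ‖f x‖ ≤ C) :
    ∃ C, ∀ x, ‖((f x).im : ℂ)‖ ≤ C :=
  hf.imp fun _ hC x => by simpa using (Complex.abs_im_le_norm _).trans (hC x)

theorem Matrix.norm_entry_le_l2_opNorm {𝕜 m n : Type*} [RCLike 𝕜] [Fintype m] [Fintype n]
    [DecidableEq n] (A : Matrix m n 𝕜) (i : m) (j : n) : ‖A i j‖ ≤ ‖A‖ := by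
  have := A.l2_opNorm_mulVec (EuclideanSpace.single j 1)
  rw [EuclideanSpace.single, PiLp.norm_single, norm_one, mul_one] at this
  exact le_trans (by simp) ((PiLp.norm_apply_le _ i).trans this)

theorem Matrix.norm_trace_le_l2_opNorm {𝕜 n : Type*} [RCLike 𝕜] [Fintype n] [DecidableEq n]
    (A : Matrix n n 𝕜) : ‖A.trace‖ ≤ Fintype.card n * ‖A‖ := by
  calc ‖A.trace‖ ≤ ∑ i, ‖A i i‖ := norm_sum_le _ _
    _ ≤ ∑ _i : n, ‖A‖ := Finset.sum_le_sum fun i _ => A.norm_entry_le_l2_opNorm i i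
    _ = Fintype.card n * ‖A‖ := by simp

theorem lp.norm_trace_conjTranspose_mul_le {G ι : Type*} [Fintype ι] [DecidableEq ι]
    (F K : lp (fun _ : G => Matrix ι ι ℂ) ∞) (z : G) :
    ‖((F z)ᴴ * K z).trace‖ ≤ Fintype.card ι * (‖F‖ * ‖K‖) := by
  grw [Matrix.norm_trace_le_l2_opNorm, Matrix.l2_opNorm_mul, Matrix.l2_opNorm_conjTranspose,
    lp.norm_apply_le_norm ENNReal.top_ne_zero F z, lp.norm_apply_le_norm ENNReal.top_ne_zero K z]

namespace SymmetricBiInvariantMean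

variable {G : Type*} [Group G] (M : SymmetricBiInvariantMean G)

theorem m_const (c : ℂ) : M.m (fun _ => c) = c := by
  simpa [M.one] using M.smul c (fun _ => 1) ⟨1, fun _ => by simp⟩

theorem m_add_mul {f g : G → ℂ} (hf : ∃ C, ∀ x, ‖f x‖ ≤ C) (hg : ∃ C, ∀ x, ‖g x‖ ≤ C) (c : ℂ) :
    M.m (fun x => f x + c * g x) = M.m f + c * M.m g := by
  obtain ⟨C, hC⟩ := hg
  rw [M.add _ _ hf ⟨‖c‖ * C, fun x => by grw [norm_mul, hC x]⟩, M.smul c g ⟨C, hC⟩]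

theorem m_eq_re_add_im {f : G → ℂ} (hf : ∃ C, ∀ x, ‖f x‖ ≤ C) (c : ℂ) :
    M.m (fun x => (f x).re + c * (f x).im) =
      (M.m fun x => ((f x).re : ℂ)).re + c * (M.m fun x => ((f x).im : ℂ)).re := by
  have hre := exists_norm_ofReal_re_le hf
  have him := exists_norm_ofReal_im_le hf
  rw [M.m_add_mul hre him, ← Complex.re_add_im (M.m _),
    ← Complex.re_add_im (M.m (fun x => ((f x).im : ℂ))), M.real _ hre fun _ => Complex.ofReal_im _,
    M.real _ him fun _ => Complex.ofReal_im _]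
  simp

theorem m_conj {f : G → ℂ} (hf : ∃ C, ∀ x, ‖f x‖ ≤ C) :
    M.m (fun x => conj (f x)) = conj (M.m f) := by
  have h : ∀ z : ℂ, conj z = z.re + (-Complex.I) * z.im ∧ z = z.re + Complex.I * z.im :=
    fun z => ⟨by apply Complex.ext <;> simp, by apply Complex.ext <;> simp⟩
  simp_rw [(h _).1]
  conv_rhs => rw [funext fun x => (h (f x)).2]
  rw [M.m_eq_re_add_im hf, M.m_eq_re_add_im hf]
  apply Complex.ext <;> simp

theorem re_m_le {f : G → ℂ} (hf : ∃ C, ∀ x, ‖f x‖ ≤ C) {C : ℝ} (h : ∀ x, (f x).re ≤ C) :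
    (M.m f).re ≤ C := by
  obtain ⟨B, hB⟩ := exists_norm_ofReal_re_le hf
  have hpos := M.pos (fun x => (C : ℂ) + (-1) * ((f x).re : ℂ))
    ⟨‖(C : ℂ)‖ + B, fun x => by grw [norm_add_le, norm_mul, hB x]; simp⟩
    (fun x => by simpa using h x)
  rw [M.m_add_mul ⟨_, fun _ => le_rfl⟩ ⟨B, hB⟩, m_const] at hpos
  have hf' := M.m_eq_re_add_im hf Complex.I
  simp_rw [mul_comm Complex.I, Complex.re_add_im] at hf'
  rw [hf']
  simpa using hpos

theorem norm_m_le {f : G → ℂ} {C : ℝ} (h : ∀ x, ‖f x‖ ≤ C) : ‖M.m f‖ ≤ C := by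
  have hC : 0 ≤ C := (norm_nonneg _).trans (h 1)
  have key : ‖M.m f‖ ^ 2 ≤ ‖M.m f‖ * C := by
    have := M.re_m_le (f := fun x => conj (M.m f) * f x) ⟨_, fun x => by grw [norm_mul, h x]⟩
      (C := ‖M.m f‖ * C) fun x => by grw [Complex.re_le_norm, norm_mul, RCLike.norm_conj, h x]
    rwa [M.smul _ _ ⟨C, h⟩, ← Complex.normSq_eq_conj_mul_self, Complex.ofReal_re,
      Complex.normSq_eq_norm_sq] at this
  nlinarith [norm_nonneg (M.m f)]

theorem exists_m_m_inner_eq_norm_sq {H : Type*} [NormedAddCommGroup H] [InnerProductSpace ℂ H]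
    [CompleteSpace H] {ψ : G → H} {C : ℝ} (hψ : ∀ x, ‖ψ x‖ ≤ C) :
    ∃ w : H, M.m (fun x => M.m fun y => ⟪ψ x, ψ y⟫_ℂ) = (‖w‖ : ℂ) ^ 2 := by
  have hbdd : ∀ u : H, ∀ x, ‖⟪ψ x, u⟫_ℂ‖ ≤ C * ‖u‖ := fun u x =>
    (norm_inner_le_norm _ _).trans (by gcongr; exact hψ x)
  let Λ : StrongDual ℂ H := LinearMap.mkContinuous
    { toFun := fun u => M.m fun x => ⟪ψ x, u⟫_ℂ
      map_add' := fun u v => by simp_rw [inner_add_right]; exact M.add _ _ ⟨_, hbdd u⟩ ⟨_, hbdd v⟩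
      map_smul' := fun c u => by simp_rw [inner_smul_right]; exact M.smul _ _ ⟨_, hbdd u⟩ }
    C fun u => M.norm_m_le (hbdd u)
  set w := (InnerProductSpace.toDual ℂ H).symm Λ
  have hw : ∀ u, ⟪w, u⟫_ℂ = M.m fun x => ⟪ψ x, u⟫_ℂ := fun u => InnerProductSpace.toDual_symm_apply
  have hinner : ∀ x, (M.m fun y => ⟪ψ x, ψ y⟫_ℂ) = ⟪ψ x, w⟫_ℂ := fun x => by
    rw [← inner_conj_symm, hw, ← M.m_conj ⟨_, hbdd (ψ x)⟩]
    simp_rw [inner_conj_symm]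
  refine ⟨w, ?_⟩
  simp_rw [hinner, ← hw]
  exact inner_self_eq_norm_sq_to_K w

theorem m_m_inner_nonneg {E : Type*} [SeminormedAddCommGroup E] [InnerProductSpace ℂ E]
    {ψ : G → E} {C : ℝ} (hψ : ∀ x, ‖ψ x‖ ≤ C) :
    0 ≤ M.m (fun x => M.m fun y => ⟪ψ x, ψ y⟫_ℂ) := by
  obtain ⟨w, hw⟩ := M.exists_m_m_inner_eq_norm_sq (ψ := fun x => (ψ x : UniformSpace.Completion E))
    fun x => (UniformSpace.Completion.norm_coe _).trans_le (hψ x)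
  simp_rw [UniformSpace.Completion.inner_coe] at hw
  rw [hw]
  exact_mod_cast sq_nonneg ‖w‖

variable {ι : Type*} [Fintype ι] [DecidableEq ι]

def traceInner (F K : lp (fun _ : G => Matrix ι ι ℂ) ∞) : ℂ :=
  M.m fun z => ((F z)ᴴ * K z).trace

variable {M}

theorem conj_traceInner (F K : lp (fun _ : G => Matrix ι ι ℂ) ∞) :
    conj (M.traceInner F K) = M.traceInner K F := by
  rw [traceInner, ← M.m_conj ⟨_, lp.norm_trace_conjTranspose_mul_le F K⟩]
  simp_rw [starRingEnd_apply, ← Matrix.trace_conjTranspose, Matrix.conjTranspose_mul,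
    Matrix.conjTranspose_conjTranspose]
  rfl

theorem traceInner_self_nonneg (F : lp (fun _ : G => Matrix ι ι ℂ) ∞) :
    0 ≤ (M.traceInner F F).re :=
  M.pos _ ⟨_, lp.norm_trace_conjTranspose_mul_le F F⟩ fun z =>
    have h := Complex.nonneg_iff.mp (Matrix.posSemidef_conjTranspose_mul_self (F z)).trace_nonneg
    ⟨h.2.symm, h.1⟩

theorem traceInner_add_left (F K L : lp (fun _ : G => Matrix ι ι ℂ) ∞) :
    M.traceInner (F + K) L = M.traceInner F L + M.traceInner K L := by
  simp only [traceInner]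
  rw [← M.add _ _ ⟨_, lp.norm_trace_conjTranspose_mul_le F L⟩
    ⟨_, lp.norm_trace_conjTranspose_mul_le K L⟩]
  simp_rw [lp.coeFn_add, Pi.add_apply, Matrix.conjTranspose_add, Matrix.add_mul,
    Matrix.trace_add]

theorem traceInner_smul_left (F K : lp (fun _ : G => Matrix ι ι ℂ) ∞) (c : ℂ) :
    M.traceInner (c • F) K = conj c * M.traceInner F K := by
  simp only [traceInner]
  rw [← M.smul _ _ ⟨_, lp.norm_trace_conjTranspose_mul_le F K⟩]
  simp_rw [lp.coeFn_smul, Pi.smul_apply, Matrix.conjTranspose_smul, Matrix.smul_mul,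
    Matrix.trace_smul]
  rfl

end SymmetricBiInvariantMean

/-- `ℓ^∞(G, M_ι(ℂ))` under another name, so that it can carry the semi-inner product
`M.traceInner` (and the seminorm `√(m_z tr(F(z)ᴴ F(z)))` instead of the sup norm). -/
def MeanL2 {G : Type*} [Group G] (_M : SymmetricBiInvariantMean G) (ι : Type*) [Fintype ι]
    [DecidableEq ι] : Type _ :=
  lp (fun _ : G => Matrix ι ι ℂ) ∞

namespace MeanL2

variable {G : Type*} [Group G] (M : SymmetricBiInvariantMean G) (ι : Type*) [Fintype ι]
  [DecidableEq ι]

noncomputable instance : AddCommGroup (MeanL2 M ι) := inferInstanceAs (AddCommGroup (lp _ ∞))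

noncomputable instance : Module ℂ (MeanL2 M ι) := inferInstanceAs (Module ℂ (lp _ ∞))

noncomputable instance : PreInnerProductSpace.Core ℂ (MeanL2 M ι) where
  inner := M.traceInner
  conj_inner_symm F K := SymmetricBiInvariantMean.conj_traceInner K F
  re_inner_nonneg F := SymmetricBiInvariantMean.traceInner_self_nonneg F
  add_left F K L := SymmetricBiInvariantMean.traceInner_add_left F K L
  smul_left F K c := SymmetricBiInvariantMean.traceInner_smul_left F K c

noncomputable instance : SeminormedAddCommGroup (MeanL2 M ι) :=
  InnerProductSpace.Core.toSeminormedAddCommGroup (𝕜 := ℂ)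

noncomputable instance : InnerProductSpace ℂ (MeanL2 M ι) := .ofCore _

noncomputable def ofLp : lp (fun _ : G => Matrix ι ι ℂ) ∞ ≃ₗ[ℂ] MeanL2 M ι :=
  LinearEquiv.refl ℂ _

variable {M ι}

theorem inner_ofLp (F K : lp (fun _ : G => Matrix ι ι ℂ) ∞) :
    ⟪ofLp M ι F, ofLp M ι K⟫_ℂ = M.m fun z => ((F z)ᴴ * K z).trace :=
  rfl

theorem norm_ofLp_le (F : lp (fun _ : G => Matrix ι ι ℂ) ∞) :
    ‖ofLp M ι F‖ ≤ √(Fintype.card ι) * ‖F‖ := by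
  refine (sq_le_sq₀ (norm_nonneg _) (by positivity)).mp ?_
  rw [@norm_sq_eq_re_inner ℂ, inner_ofLp, mul_pow, Real.sq_sqrt (Nat.cast_nonneg _), sq]
  exact (Complex.re_le_norm _).trans (M.norm_m_le (lp.norm_trace_conjTranspose_mul_le F F))

end MeanL2

theorem iterated_mean_nonneg_first_general
    {G : Type*} [Group G] (M : SymmetricBiInvariantMean G)
    (n : ℕ)
    (φ : G → Matrix (Fin n) (Fin n) ℂ)
    (hφ : ∀ x : G, matOpNorm (φ x) ≤ 1) :
    (M.m (fun x => M.m (fun y => M.m (fun z =>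
        Matrix.trace (φ x * (φ y)ᴴ * φ (y * z) * (φ (x * z))ᴴ))))).im = 0 ∧
    0 ≤ (M.m (fun x => M.m (fun y => M.m (fun z =>
        Matrix.trace (φ x * (φ y)ᴴ * φ (y * z) * (φ (x * z))ᴴ))))).re := by
  have hψ : ∀ x z, ‖(φ x)ᴴ * φ (x * z)‖ ≤ 1 := fun x z => by
    grw [Matrix.l2_opNorm_mul, Matrix.l2_opNorm_conjTranspose, show ‖φ x‖ ≤ 1 from hφ x,
      show ‖φ (x * z)‖ ≤ 1 from hφ _, one_mul]
  let ψ (x : G) : lp (fun _ : G => Matrix (Fin n) (Fin n) ℂ) ∞ :=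
    ⟨fun z => (φ x)ᴴ * φ (x * z), memℓp_infty ⟨1, Set.forall_mem_range.2 (hψ x)⟩⟩
  have inner_mean (x y : G) : M.m (fun z => (φ x * (φ y)ᴴ * φ (y * z) * (φ (x * z))ᴴ).trace) =
      ⟪MeanL2.ofLp M _ (ψ x), MeanL2.ofLp M _ (ψ y)⟫_ℂ := by
    rw [MeanL2.inner_ofLp]
    congr 1 with z
    rw [Matrix.trace_mul_comm]
    simp [ψ, Matrix.conjTranspose_mul, Matrix.mul_assoc]
  have := M.m_m_inner_nonneg (ψ := fun x => MeanL2.ofLp M _ (ψ x)) fun x =>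
    (MeanL2.norm_ofLp_le (ψ x)).trans (mul_le_mul_of_nonneg_left
      (lp.norm_le_of_forall_le zero_le_one (hψ x)) (Real.sqrt_nonneg _))
  simp_rw [← inner_mean] at this
  exact ⟨(Complex.nonneg_iff.mp this).2.symm, (Complex.nonneg_iff.mp this).1⟩

/-- The iterated mean `𝔼_x 𝔼_y 𝔼_z tr (φ(x) φ(y)* φ(yz) φ(xz)*)` is a nonnegative real
number, for any `φ : G → Mₙ(ℂ)` with `‖φ(x)‖_op ≤ 1`. -/
theorem iterated_mean_nonneg_first
    {G : Type*} [Group G] [Countable G] (M : SymmetricBiInvariantMean G)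
    (n : ℕ) (hn : 1 ≤ n)
    (φ : G → Matrix (Fin n) (Fin n) ℂ)
    (hφ : ∀ x : G, matOpNorm (φ x) ≤ 1) :
    (M.m (fun x => M.m (fun y => M.m (fun z =>
        Matrix.trace (φ x * (φ y)ᴴ * φ (y * z) * (φ (x * z))ᴴ))))).im = 0 ∧
    0 ≤ (M.m (fun x => M.m (fun y => M.m (fun z =>
        Matrix.trace (φ x * (φ y)ᴴ * φ (y * z) * (φ (x * z))ᴴ))))).re :=
  iterated_mean_nonneg_first_general M n φ hφ
end
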